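/- arXiv:2208.12955 — 3 statements merged into one kernel-verified Lean document; each statement's English description precedes it below -/
import Mathlib

section
/- Let X be an irreducible, time-homogeneous Markov chain on ℤ₊ satisfying (B) and (L). If ν > 0, then there exists x₀ ∈ [0,∞) such that E[ f_{γ_c,ν}(X_{n+1}) − f_{γ_c,ν}(X_n) | X_n = x ] ≤ 0 for all x ≥ x₀. If ν < 0, then there exists x₀ ∈ [0,∞) such that E[ f_{γ_c,ν}(X_{n+1}) − f_{γ_c,ν}(X_n) | X_n = x ] ≥ 0 for all x ≥ x₀. -/
open MeasureTheory Filter Set Classical Asymptotics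

noncomputable section

/-- A time-homogeneous Markov chain on a state space `S`, given by one-step transition
probabilities `p` and, for each starting state `i`, the law `law i` of the trajectory
`(X_0, X_1, ...)` on path space, characterized by the usual cylinder-set formula. -/
structure MarkovChain (S : Type) [MeasurableSpace S] where
  p : S → S → ENNReal
  p_sum : ∀ i, ∑' j, p i j = 1
  law : S → Measure (ℕ → S)
  law_prob : ∀ i, IsProbabilityMeasure (law i)
  law_cyl : ∀ (i : S) (n : ℕ) (x : ℕ → S), x 0 = i →
    law i {ω | ∀ k ≤ n, ω k = x k} = ∏ k ∈ Finset.range n, p (x k) (x (k + 1))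

variable {S : Type} [MeasurableSpace S]

/-- Irreducibility of the chain. -/
def MarkovChain.Irred (X : MarkovChain S) : Prop :=
  ∀ i j : S, ∃ n : ℕ, 0 < X.law i {ω | ω n = j}

/-- Assumption (B): uniformly bounded increments, `|X_{n+1} - X_n| ≤ B` a.s. -/
def AssumptionB (X : MarkovChain ℕ) (B : ℕ) : Prop :=
  ∀ (x n : ℕ), X.law x {ω | ((ω (n + 1) : ℤ) - (ω n : ℤ)).natAbs ≤ B} = 1

/-- Assumption (I): uniform irreducibility, with constants `ε > 0` and `m ∈ ℕ`. -/
def AssumptionIWith (X : MarkovChain ℕ) (B : ℕ) (ε : ENNReal) (m : ℕ) : Prop :=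
  0 < ε ∧ 1 ≤ m ∧ ∀ i j : ℕ, ((j : ℤ) - (i : ℤ)).natAbs ≤ B →
    ∃ n : ℕ, 1 ≤ n ∧ n ≤ m ∧ ε ≤ X.law i {ω | ω n = j}

/-- Assumption (I): uniform irreducibility. -/
def AssumptionI (X : MarkovChain ℕ) (B : ℕ) : Prop :=
  ∃ (ε : ENNReal) (m : ℕ), AssumptionIWith X B ε m

/-- Increment moment function `μ_k(x) = E[(X_{n+1} - X_n)^k | X_n = x]`. -/
def mu (X : MarkovChain ℕ) (k x : ℕ) : ℝ :=
  ∑' j : ℕ, (X.p x j).toReal * ((j : ℝ) - (x : ℝ)) ^ k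

/-- Assumption (L): Lamperti-type drift conditions with parameters `c` and `s2 = s²`,
`μ₁(x) = c/x + o(1/(x log x))` and `μ₂(x) = s² + o(1/ log x)` as `x → ∞`,
together with `2c > s² > 0`. -/
def AssumptionL (X : MarkovChain ℕ) (c s2 : ℝ) : Prop :=
  2 * c > s2 ∧ s2 > 0 ∧
    (fun x : ℕ => mu X 1 x - c / (x : ℝ)) =o[atTop]
      (fun x : ℕ => 1 / ((x : ℝ) * Real.log x)) ∧
    (fun x : ℕ => mu X 2 x - s2) =o[atTop] (fun x : ℕ => 1 / Real.log x)

/-- The Lyapunov function `f_{γ,ν}(t) = t^{-γ} (log t)^ν` for `t ≥ e`, and `e^{-γ}`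
for `0 ≤ t < e`. -/
def lyap (γ ν : ℝ) (t : ℝ) : ℝ :=
  if t < Real.exp 1 then Real.exp (-γ) else t ^ (-γ) * Real.log t ^ ν

/-! ### Auxiliary elementary limits -/

open Topology Real in
lemma hda_rpow (p u : ℝ) (hu : 1 + u ≠ 0) :
    HasDerivAt (fun u : ℝ => (1+u)^p) (p * (1+u)^(p-1)) u := by
  have h1 : HasDerivAt (fun u : ℝ => (1:ℝ)+u) 1 u := (hasDerivAt_id u).const_add 1
  simpa using h1.rpow_const (Or.inl hu)

open Topology Real in
lemma hda_log (u : ℝ) (hu : 1 + u ≠ 0) :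
    HasDerivAt (fun u : ℝ => Real.log (1+u)) ((1+u)⁻¹) u := by
  have h1 : HasDerivAt (fun u : ℝ => (1:ℝ)+u) 1 u := (hasDerivAt_id u).const_add 1
  simpa using h1.log hu

open Topology Real in
lemma rpow_slope (p : ℝ) : Tendsto (fun u : ℝ => ((1+u)^p - 1)/u) (𝓝[≠] (0:ℝ)) (𝓝 p) := by
  have h := hda_rpow p 0 (by norm_num)
  rw [hasDerivAt_iff_tendsto_slope] at h
  simp only [add_zero, Real.one_rpow, mul_one] at h
  refine h.congr (fun u => ?_)
  simp [slope_def_field]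

open Topology Real in
lemma log_slope : Tendsto (fun u : ℝ => Real.log (1+u)/u) (𝓝[≠] (0:ℝ)) (𝓝 1) := by
  have h := hda_log 0 (by norm_num)
  rw [hasDerivAt_iff_tendsto_slope] at h
  simp only [add_zero, Real.log_one, inv_one] at h
  refine h.congr (fun u => ?_)
  simp [slope_def_field]

open Topology Real in
lemma near_ne : ∀ᶠ u : ℝ in 𝓝[≠] (0:ℝ), u ≠ 0 := self_mem_nhdsWithin

open Topology Real in
lemma near_pos : ∀ᶠ u : ℝ in 𝓝[≠] (0:ℝ), 1 + u ≠ 0 := by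
  filter_upwards [(eventually_abs_sub_lt (0:ℝ) (by norm_num : (0:ℝ) < 1/2)).filter_mono
    nhdsWithin_le_nhds] with u hu
  rw [sub_zero] at hu
  cases abs_lt.1 hu with | intro h1 h2 => nlinarith

open Topology Real in
lemma psi_lim (p : ℝ) : Tendsto (fun u : ℝ => ((1+u)^p - 1 - p*u)/u^2) (𝓝[≠] (0:ℝ))
    (𝓝 (p*(p-1)/2)) := by
  apply HasDerivAt.lhopital_zero_nhdsNE (f' := fun u => p*(1+u)^(p-1) - p) (g' := fun u => 2*u)
  · filter_upwards [near_pos] with u hu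
    have := ((hda_rpow p u hu).sub_const 1).sub ((hasDerivAt_id u).const_mul p)
    simpa [Pi.sub_def] using this
  · filter_upwards with u
    simpa using (hasDerivAt_pow 2 u)
  · filter_upwards [near_ne] with u hu
    simpa using hu
  · have hc : ContinuousAt (fun u : ℝ => (1+u)^p - 1 - p*u) 0 :=
      (((hda_rpow p 0 (by norm_num)).continuousAt.sub continuousAt_const).sub
        (continuousAt_const.mul continuousAt_id))
    have := hc.tendsto.mono_left (nhdsWithin_le_nhds (s := {(0:ℝ)}ᶜ))
    simpa using this
  · have : Tendsto (fun u : ℝ => u^2) (𝓝 (0:ℝ)) (𝓝 (0:ℝ)) := by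
      simpa using (continuous_pow 2).tendsto (0:ℝ)
    exact this.mono_left nhdsWithin_le_nhds
  · have h := (rpow_slope (p-1)).const_mul (p/2)
    have h2 : Tendsto (fun u : ℝ => (p/2) * (((1+u)^(p-1) - 1)/u)) (𝓝[≠] (0:ℝ))
        (𝓝 (p*(p-1)/2)) := by
      convert h using 2; ring
    refine h2.congr' ?_
    filter_upwards [near_ne] with u hu
    field_simp

open Topology Real in
lemma chi_lim : Tendsto (fun u : ℝ => (Real.log (1+u) - u)/u^2) (𝓝[≠] (0:ℝ))
    (𝓝 (-(1/2))) := by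
  apply HasDerivAt.lhopital_zero_nhdsNE (f' := fun u => (1+u)⁻¹ - 1) (g' := fun u => 2*u)
  · filter_upwards [near_pos] with u hu
    exact (hda_log u hu).sub (hasDerivAt_id u)
  · filter_upwards with u
    simpa using (hasDerivAt_pow 2 u)
  · filter_upwards [near_ne] with u hu
    simpa using hu
  · have hc : ContinuousAt (fun u : ℝ => Real.log (1+u) - u) 0 :=
      (hda_log 0 (by norm_num)).continuousAt.sub continuousAt_id
    have := hc.tendsto.mono_left (nhdsWithin_le_nhds (s := {(0:ℝ)}ᶜ))
    simpa using this
  · have : Tendsto (fun u : ℝ => u^2) (𝓝 (0:ℝ)) (𝓝 (0:ℝ)) := by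
      simpa using (continuous_pow 2).tendsto (0:ℝ)
    exact this.mono_left nhdsWithin_le_nhds
  · have hcont : Tendsto (fun u : ℝ => -(2*(1+u))⁻¹) (𝓝[≠] (0:ℝ)) (𝓝 (-(1/2))) := by
      have : ContinuousAt (fun u : ℝ => -(2*(1+u))⁻¹) 0 := by
        apply ContinuousAt.neg
        apply ContinuousAt.inv₀ (by fun_prop) (by norm_num)
      have := this.tendsto.mono_left (nhdsWithin_le_nhds (s := {(0:ℝ)}ᶜ))
      simpa using this
    refine hcont.congr' ?_
    filter_upwards [near_ne, near_pos] with u hu hu1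
    field_simp
    ring

open Topology Real in
lemma phi_lim (p : ℝ) : Tendsto (fun u : ℝ => ((1+u)^p - 1 - p*u - p*(p-1)/2*u^2)/u^3)
    (𝓝[≠] (0:ℝ)) (𝓝 (p*(p-1)*(p-2)/6)) := by
  apply HasDerivAt.lhopital_zero_nhdsNE (f' := fun u => p*(1+u)^(p-1) - p - p*(p-1)*u)
    (g' := fun u => 3*u^2)
  · filter_upwards [near_pos] with u hu
    have := (((hda_rpow p u hu).sub_const 1).sub ((hasDerivAt_id u).const_mul p)).sub
      (((hasDerivAt_id u).pow 2).const_mul (p*(p-1)/2))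
    simp only [id_eq, pow_one, Nat.cast_ofNat] at this
    exact this.congr_deriv (by norm_num; ring)
  · filter_upwards with u
    simpa using (hasDerivAt_pow 3 u)
  · filter_upwards [near_ne] with u hu
    simp [pow_eq_zero_iff, hu]
  · have hc : ContinuousAt (fun u : ℝ => (1+u)^p - 1 - p*u - p*(p-1)/2*u^2) 0 := by
      apply ContinuousAt.sub
      apply ContinuousAt.sub
      apply ContinuousAt.sub (hda_rpow p 0 (by norm_num)).continuousAt continuousAt_const
      · exact continuousAt_const.mul continuousAt_id
      · exact continuousAt_const.mul (continuousAt_id.pow 2)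
    have := hc.tendsto.mono_left (nhdsWithin_le_nhds (s := {(0:ℝ)}ᶜ))
    simpa using this
  · have : Tendsto (fun u : ℝ => u^3) (𝓝 (0:ℝ)) (𝓝 (0:ℝ)) := by
      simpa using (continuous_pow 3).tendsto (0:ℝ)
    exact this.mono_left nhdsWithin_le_nhds
  · have h := (psi_lim (p-1)).const_mul (p/3)
    have h2 : Tendsto (fun u : ℝ => (p/3) * (((1+u)^(p-1) - 1 - (p-1)*u)/u^2)) (𝓝[≠] (0:ℝ))
        (𝓝 (p*(p-1)*(p-2)/6)) := by
      convert h using 2; ring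
    refine h2.congr' ?_
    filter_upwards [near_ne] with u hu
    field_simp

/-- The normalized one-step error term in the Taylor-type expansion of the Lyapunov
function. -/
def rho (γ ν d : ℝ) (x : ℝ) : ℝ :=
  x^2 * Real.log x *
    ((1+d/x)^(-γ) * (1 + Real.log (1+d/x)/Real.log x)^ν - 1 + γ*(d/x)
      - γ*(γ+1)*d^2/(2*x^2) - ν*d/(x*Real.log x) + ν*(2*γ+1)*d^2/(2*x^2*Real.log x))

open Topology Real in
lemma rho_tendsto (γ ν d : ℝ) : Tendsto (rho γ ν d) atTop (𝓝 0) := by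
  unfold rho
  rcases eq_or_ne d 0 with rfl | hd
  · have : ∀ x : ℝ, x^2 * Real.log x *
      ((1+(0:ℝ)/x)^(-γ) * (1 + Real.log (1+(0:ℝ)/x)/Real.log x)^ν - 1 + γ*((0:ℝ)/x)
        - γ*(γ+1)*(0:ℝ)^2/(2*x^2) - ν*0/(x*Real.log x) + ν*(2*γ+1)*(0:ℝ)^2/(2*x^2*Real.log x)) = 0 := by
      intro x
      simp [Real.one_rpow]
    simpa [this] using tendsto_const_nhds (α := ℝ) (f := atTop) (x := (0:ℝ))
  have hu0 : Tendsto (fun x : ℝ => d/x) atTop (𝓝 (0:ℝ)) :=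
    tendsto_const_nhds.div_atTop tendsto_id
  have hupos : ∀ᶠ x : ℝ in atTop, 0 < 1 + d/x := by
    filter_upwards [hu0.eventually (eventually_abs_sub_lt (0:ℝ) (by norm_num : (0:ℝ) < 1/2))]
      with x hx
    rw [sub_zero] at hx
    cases abs_lt.1 hx with | intro h1 h2 => linarith
  have hxpos : ∀ᶠ x : ℝ in atTop, 0 < x := eventually_gt_atTop 0
  have hu : Tendsto (fun x : ℝ => d/x) atTop (𝓝[≠] (0:ℝ)) := by
    rw [tendsto_nhdsWithin_iff]
    refine ⟨hu0, ?_⟩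
    filter_upwards [hxpos] with x hx
    exact div_ne_zero hd (ne_of_gt hx)
  have hlg0 : Tendsto (fun x : ℝ => Real.log (1+d/x)) atTop (𝓝 (0:ℝ)) := by
    have : ContinuousAt Real.log 1 := Real.continuousAt_log one_ne_zero
    have h1u : Tendsto (fun x : ℝ => 1 + d/x) atTop (𝓝 (1:ℝ)) := by
      simpa using (tendsto_const_nhds (x := (1:ℝ))).add hu0
    have h2 := this.tendsto.comp h1u
    simpa [Function.comp_def] using h2
  have hlgne : ∀ᶠ x : ℝ in atTop, Real.log (1+d/x) ≠ 0 := by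
    filter_upwards [hupos, hxpos] with x h1 h2
    have : 1 + d/x ≠ 1 := by
      intro h
      exact (div_ne_zero hd (ne_of_gt h2)) (by linarith)
    exact Real.log_ne_zero_of_pos_of_ne_one h1 this
  have hlogtop : Tendsto Real.log atTop atTop := Real.tendsto_log_atTop
  have hLne : ∀ᶠ x : ℝ in atTop, Real.log x ≠ 0 := by
    filter_upwards [hlogtop.eventually_gt_atTop 0] with x hx
    exact ne_of_gt hx
  have hw : Tendsto (fun x : ℝ => Real.log (1+d/x)/Real.log x) atTop (𝓝[≠] (0:ℝ)) := by
    rw [tendsto_nhdsWithin_iff]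
    constructor
    · exact hlg0.div_atTop hlogtop
    · filter_upwards [hlgne, hLne] with x h1 h2
      exact div_ne_zero h1 h2
  have hA : Tendsto (fun x : ℝ => (1+d/x)^(-γ)) atTop (𝓝 (1:ℝ)) := by
    have hc : ContinuousAt (fun t : ℝ => t^(-γ)) 1 :=
      Real.continuousAt_rpow_const 1 (-γ) (Or.inl one_ne_zero)
    have h1u : Tendsto (fun x : ℝ => 1 + d/x) atTop (𝓝 (1:ℝ)) := by
      simpa using (tendsto_const_nhds (x := (1:ℝ))).add hu0
    have := hc.tendsto.comp h1u
    simpa [Function.comp_def] using this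
  have hLox : Tendsto (fun x : ℝ => Real.log x / x) atTop (𝓝 (0:ℝ)) :=
    Real.isLittleO_log_id_atTop.tendsto_div_nhds_zero
  have hinvL : Tendsto (fun x : ℝ => 1/Real.log x) atTop (𝓝 (0:ℝ)) := by
    simp only [one_div]; exact hlogtop.inv_tendsto_atTop
  have hxlg : Tendsto (fun x : ℝ => x * Real.log (1+d/x)) atTop (𝓝 d) := by
    have h := (log_slope.comp hu).const_mul d
    have : Tendsto (fun x : ℝ => d * (Real.log (1+d/x)/(d/x))) atTop (𝓝 (d*1)) := h
    rw [mul_one] at this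
    refine this.congr' ?_
    filter_upwards [hxpos] with x hx
    field_simp
  have hE1 : Tendsto (fun x : ℝ => (Real.log x / x) * (d^3 *
      (((1+d/x)^(-γ) - 1 - (-γ)*(d/x) - (-γ)*(-γ-1)/2*(d/x)^2)/(d/x)^3))) atTop
      (𝓝 (0 * (d^3 * ((-γ)*((-γ)-1)*((-γ)-2)/6)))) :=
    hLox.mul (tendsto_const_nhds.mul ((phi_lim (-γ)).comp hu))
  have hE2 : Tendsto (fun x : ℝ => ((1+d/x)^(-γ)) * ((x * Real.log (1+d/x))^2 * (1/Real.log x) *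
      (((1 + Real.log (1+d/x)/Real.log x)^ν - 1 - ν*(Real.log (1+d/x)/Real.log x))
        /(Real.log (1+d/x)/Real.log x)^2))) atTop
      (𝓝 (1 * (d^2 * 0 * (ν*(ν-1)/2)))) :=
    hA.mul (((hxlg.pow 2).mul hinvL).mul ((psi_lim ν).comp hw))
  have hE3 : Tendsto (fun x : ℝ => ν * ((1+d/x)^(-γ) * (d^2 *
      ((Real.log (1+d/x) - d/x)/(d/x)^2)))) atTop
      (𝓝 (ν * (1 * (d^2 * (-(1/2)))))) :=
    (hA.mul (tendsto_const_nhds.mul (chi_lim.comp hu))).const_mul ν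
  have hE4 : Tendsto (fun x : ℝ => ν * d * (d * (((1+d/x)^(-γ) - 1)/(d/x)))) atTop
      (𝓝 (ν * d * (d * (-γ)))) :=
    (tendsto_const_nhds.mul ((rpow_slope (-γ)).comp hu)).const_mul (ν*d)
  have hsum := ((((hE1.add hE2).add hE3).add hE4).add
    (tendsto_const_nhds (x := ν*(2*γ+1)*d^2/2)))
  have hval : (0 * (d^3 * ((-γ)*((-γ)-1)*((-γ)-2)/6))) + (1 * (d^2 * 0 * (ν*(ν-1)/2)))
      + (ν * (1 * (d^2 * (-(1/2))))) + (ν * d * (d * (-γ))) + ν*(2*γ+1)*d^2/2 = 0 := by ring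
  rw [hval] at hsum
  refine hsum.congr' ?_
  filter_upwards [hxpos, hupos, hlgne, hlogtop.eventually_gt_atTop 1] with x hx hu1 hlg hL1
  have hxne : x ≠ 0 := ne_of_gt hx
  have hLne' : Real.log x ≠ 0 := by linarith
  have hune : d/x ≠ 0 := div_ne_zero hd hxne
  set lg := Real.log (1+d/x) with hlgdef
  set L := Real.log x with hLdef
  set A := (1+d/x)^(-γ) with hAdef
  set W := (1 + lg/L)^ν with hWdef
  field_simp
  ring

/-! ### Markov chain facts -/

lemma p_le_one (X : MarkovChain ℕ) (x j : ℕ) : X.p x j ≤ 1 :=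
  le_of_le_of_eq (ENNReal.le_tsum j) (X.p_sum x)

lemma p_zero (X : MarkovChain ℕ) (B : ℕ) (hB : AssumptionB X B) (x j : ℕ)
    (h : B < ((j:ℤ) - (x:ℤ)).natAbs) : X.p x j = 0 := by
  classical
  set y : ℕ → ℕ := fun k => if k = 0 then x else j with hy
  have hcyl := X.law_cyl x 1 y (by simp [hy])
  have hC : X.law x {ω | ∀ k ≤ 1, ω k = y k} = X.p x j := by
    rw [hcyl]
    simp [hy]
  set A : Set (ℕ → ℕ) := {ω | ((ω 1 : ℤ) - (ω 0 : ℤ)).natAbs ≤ B} with hA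
  have hAmeas : MeasurableSet A := by
    have : A = (fun ω : ℕ → ℕ => (ω 1, ω 0)) ⁻¹'
        {q : ℕ × ℕ | ((q.1 : ℤ) - (q.2 : ℤ)).natAbs ≤ B} := rfl
    rw [this]
    exact ((measurable_pi_apply 1).prodMk (measurable_pi_apply 0))
      ((Set.to_countable _).measurableSet)
  have hA1 : X.law x A = 1 := hB x 0
  have := X.law_prob x
  have hAc : X.law x Aᶜ = 0 := by
    rw [prob_compl_eq_one_sub hAmeas, hA1]
    simp
  have hsub : {ω : ℕ → ℕ | ∀ k ≤ 1, ω k = y k} ⊆ Aᶜ := by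
    intro ω hω
    have h0 : ω 0 = x := by simpa [hy] using hω 0 (by norm_num)
    have h1 : ω 1 = j := by simpa [hy] using hω 1 (le_refl 1)
    simp only [Set.mem_compl_iff, hA, Set.mem_setOf_eq, h0, h1, not_le]
    exact h
  have := measure_mono hsub (μ := X.law x)
  rw [hC, hAc] at this
  exact le_antisymm this (zero_le)

lemma p_zero' (X : MarkovChain ℕ) (B : ℕ) (hB : AssumptionB X B) (x j : ℕ) (hx : B ≤ x)
    (hj : j ∉ (Finset.range (2*B+1)).image (fun k => x - B + k)) : X.p x j = 0 := by
  apply p_zero X B hB x j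
  by_contra h
  push_neg at h
  apply hj
  rw [Finset.mem_image]
  exact ⟨j - (x - B), Finset.mem_range.2 (by omega), by omega⟩

lemma sum_eq (X : MarkovChain ℕ) (B : ℕ) (hB : AssumptionB X B) (x : ℕ) (hx : B ≤ x)
    (F : ℕ → ℝ) :
    ∑' j : ℕ, (X.p x j).toReal * F j
      = ∑ k ∈ Finset.range (2*B+1), (X.p x (x - B + k)).toReal * F (x - B + k) := by
  rw [tsum_eq_sum (s := (Finset.range (2*B+1)).image (fun k => x - B + k))
    (fun j hj => by rw [p_zero' X B hB x j hx hj]; simp)]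
  rw [Finset.sum_image (fun a _ b _ h => by omega)]

lemma mu_eq (X : MarkovChain ℕ) (B : ℕ) (hB : AssumptionB X B) (m x : ℕ) (hx : B ≤ x) :
    mu X m x = ∑ k ∈ Finset.range (2*B+1),
      (X.p x (x - B + k)).toReal * ((k:ℝ) - B)^m := by
  rw [mu, sum_eq X B hB x hx]
  refine Finset.sum_congr rfl fun k hk => ?_
  congr 2
  push_cast [Nat.cast_sub hx]
  ring

/-! ### lyap facts -/

lemma lyap_pos (γ ν t : ℝ) : 0 < lyap γ ν t := by
  rw [lyap]
  split_ifs with h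
  · exact Real.exp_pos _
  · push_neg at h
    have he : (1:ℝ) < Real.exp 1 := by
      have := Real.exp_one_gt_d9; linarith
    have h1 : (1:ℝ) < t := lt_of_lt_of_le he h
    have h0 : (0:ℝ) < t := by linarith
    exact mul_pos (Real.rpow_pos_of_pos h0 _)
      (Real.rpow_pos_of_pos (Real.log_pos h1) _)

lemma lyap_eq (γ ν t : ℝ) (ht : 3 ≤ t) : lyap γ ν t = t ^ (-γ) * Real.log t ^ ν := by
  rw [lyap, if_neg]
  push_neg
  have := Real.exp_one_lt_d9
  linarith

/-- Main algebraic identity: the normalized drift decomposes into remainder plus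
moment terms. -/
lemma G_eq (X : MarkovChain ℕ) (B : ℕ) (hB : AssumptionB X B) (γ ν : ℝ) (x : ℕ)
    (hx : 2*B+3 ≤ x) :
    (x:ℝ)^2 * Real.log x / lyap γ ν x *
      (∑' j : ℕ, (X.p x j).toReal * (lyap γ ν (j:ℝ) - lyap γ ν (x:ℝ)))
    = (∑ k ∈ Finset.range (2*B+1),
        (X.p x (x - B + k)).toReal * rho γ ν ((k:ℝ)-B) x)
      + (ν*(x:ℝ) - γ*((x:ℝ)*Real.log x)) * mu X 1 x
      + (γ*(γ+1)/2*Real.log x - ν*(2*γ+1)/2) * mu X 2 x := by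
  have hBx : B ≤ x := by omega
  have hx3 : (3:ℝ) ≤ (x:ℝ) := by exact_mod_cast (by omega : 3 ≤ x)
  have hxpos : (0:ℝ) < (x:ℝ) := by linarith
  have hxne : (x:ℝ) ≠ 0 := ne_of_gt hxpos
  have hL1 : 1 < Real.log x := by
    rw [Real.lt_log_iff_exp_lt hxpos]
    have := Real.exp_one_lt_d9
    linarith
  have hLpos : 0 < Real.log x := by linarith
  have hLne : Real.log x ≠ 0 := ne_of_gt hLpos
  have hfx : lyap γ ν (x:ℝ) = (x:ℝ)^(-γ) * Real.log x ^ ν := lyap_eq γ ν _ hx3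
  have hfxpos : 0 < lyap γ ν (x:ℝ) := lyap_pos γ ν _
  have hfxne : lyap γ ν (x:ℝ) ≠ 0 := ne_of_gt hfxpos
  rw [sum_eq X B hB x hBx, mu_eq X B hB 1 x hBx, mu_eq X B hB 2 x hBx,
    Finset.mul_sum, Finset.mul_sum, Finset.mul_sum, ← Finset.sum_add_distrib,
    ← Finset.sum_add_distrib]
  refine Finset.sum_congr rfl fun k hk => ?_
  have hk' : k < 2*B+1 := Finset.mem_range.1 hk
  set d : ℝ := (k:ℝ) - B with hd
  have hdlb : -(B:ℝ) ≤ d := by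
    rw [hd]
    have : (0:ℝ) ≤ (k:ℝ) := Nat.cast_nonneg k
    linarith
  have hdub : d ≤ (B:ℝ) := by
    rw [hd]
    have : (k:ℝ) ≤ 2*(B:ℝ) := by exact_mod_cast (by omega : k ≤ 2*B)
    linarith
  have hxB : 2*(B:ℝ) + 3 ≤ (x:ℝ) := by exact_mod_cast hx
  have hjcast : ((x - B + k : ℕ) : ℝ) = (x:ℝ) + d := by
    push_cast [Nat.cast_sub hBx]
    rw [hd]; ring
  have hj3 : (3:ℝ) ≤ ((x - B + k : ℕ) : ℝ) := by
    rw [hjcast]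
    linarith
  have hu1 : (1:ℝ)/2 ≤ 1 + d/(x:ℝ) := by
    have h1 : -(1/2:ℝ) ≤ d/(x:ℝ) := by
      rw [le_div_iff₀ hxpos]
      linarith
    linarith
  have hupos : (0:ℝ) < 1 + d/(x:ℝ) := by linarith
  have hune : (1:ℝ) + d/(x:ℝ) ≠ 0 := ne_of_gt hupos
  set lg : ℝ := Real.log (1 + d/(x:ℝ)) with hlg
  have hlg_lb : -1 < lg := by
    rw [hlg]
    have h1 : Real.log (1/2 : ℝ) ≤ Real.log (1 + d/(x:ℝ)) :=
      Real.log_le_log (by norm_num) hu1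
    have h2 : Real.log (1/2 : ℝ) = -Real.log 2 := by
      rw [one_div, Real.log_inv]
    have := Real.log_two_lt_d9
    linarith
  have hwpos : (0:ℝ) < 1 + lg/Real.log x := by
    have hsum : 0 < Real.log x + lg := by linarith
    have : 1 + lg/Real.log x = (Real.log x + lg)/Real.log x := by
      field_simp
    rw [this]
    exact div_pos hsum hLpos
  have hfj : lyap γ ν ((x - B + k : ℕ) : ℝ)
      = lyap γ ν (x:ℝ) * ((1 + d/(x:ℝ))^(-γ) * (1 + lg/Real.log x)^ν) := by
    rw [lyap_eq γ ν _ hj3, hjcast]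
    have hxd : (x:ℝ) + d = (x:ℝ) * (1 + d/(x:ℝ)) := by field_simp
    rw [hxd, Real.mul_rpow hxpos.le hupos.le, Real.log_mul hxne hune]
    have hLL : Real.log x + Real.log (1 + d/(x:ℝ))
        = Real.log x * (1 + lg/Real.log x) := by
      rw [← hlg]; field_simp
    rw [hLL, Real.mul_rpow hLpos.le hwpos.le, hfx]
    ring
  rw [hfj]
  set A : ℝ := (1 + d/(x:ℝ))^(-γ) with hA
  set W : ℝ := (1 + lg/Real.log x)^ν with hW
  have hrho : rho γ ν d (x:ℝ) = (x:ℝ)^2 * Real.log x * (A * W - 1 + γ*(d/(x:ℝ))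
      - γ*(γ+1)*d^2/(2*(x:ℝ)^2) - ν*d/((x:ℝ)*Real.log x)
      + ν*(2*γ+1)*d^2/(2*(x:ℝ)^2*Real.log x)) := by
    rw [rho, ← hlg, ← hA, ← hW]
  rw [hrho]
  field_simp
  ring

/-- Lemma 5.4: for `γ_c = (2c - s²)/s²`, the process `f_{γ_c,ν}(X_n)` is a supermartingale
outside a bounded set if `ν > 0` and a submartingale outside a bounded set if `ν < 0`:
the one-step mean increment `E[f_{γ_c,ν}(X_{n+1}) - f_{γ_c,ν}(X_n) | X_n = x]` is `≤ 0`
(resp. `≥ 0`) for all sufficiently large `x`. -/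
theorem lyapunov_drift (X : MarkovChain ℕ) (B : ℕ) (c s2 ν : ℝ)
    (hirr : X.Irred) (hB : AssumptionB X B) (hL : AssumptionL X c s2) :
    (0 < ν → ∃ x0 : ℕ, ∀ x : ℕ, x0 ≤ x →
      (∑' j : ℕ, (X.p x j).toReal *
        (lyap ((2 * c - s2) / s2) ν (j : ℝ) - lyap ((2 * c - s2) / s2) ν (x : ℝ))) ≤ 0) ∧
    (ν < 0 → ∃ x0 : ℕ, ∀ x : ℕ, x0 ≤ x →
      0 ≤ ∑' j : ℕ, (X.p x j).toReal *
        (lyap ((2 * c - s2) / s2) ν (j : ℝ) - lyap ((2 * c - s2) / s2) ν (x : ℝ))) := by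
  obtain ⟨hcs, hs2, h1, h2⟩ := hL
  set γ : ℝ := (2 * c - s2) / s2 with hγdef
  have hs2' : s2 ≠ 0 := ne_of_gt hs2
  have hlogcast : Tendsto (fun x : ℕ => Real.log x) atTop atTop :=
    Real.tendsto_log_atTop.comp tendsto_natCast_atTop_atTop
  have hinvL : Tendsto (fun x : ℕ => (Real.log x)⁻¹) atTop (nhds 0) :=
    hlogcast.inv_tendsto_atTop
  have hevL : ∀ᶠ x : ℕ in atTop, Real.log (x:ℝ) ≠ 0 ∧ ((x:ℝ)) ≠ 0 := by
    filter_upwards [eventually_ge_atTop 2] with x hx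
    have hx2 : (2:ℝ) ≤ (x:ℝ) := by exact_mod_cast hx
    exact ⟨ne_of_gt (Real.log_pos (by linarith)), by linarith⟩
  have T2 : Tendsto (fun x : ℕ => Real.log x * ((x:ℝ) * mu X 1 x - c)) atTop (nhds 0) := by
    refine h1.tendsto_div_nhds_zero.congr' ?_
    filter_upwards [hevL] with x ⟨hLne, hxne⟩
    field_simp
  have T1 : Tendsto (fun x : ℕ => (x:ℝ) * mu X 1 x) atTop (nhds c) := by
    have h0 : Tendsto (fun x : ℕ => (x:ℝ) * mu X 1 x - c) atTop (nhds 0) := by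
      have hmul := T2.mul hinvL
      rw [mul_zero] at hmul
      refine hmul.congr' ?_
      filter_upwards [hevL] with x ⟨hLne, _⟩
      rw [mul_comm (Real.log x), mul_assoc, mul_inv_cancel₀ hLne, mul_one]
    have := h0.add (tendsto_const_nhds (x := c))
    simpa using this
  have T3 : Tendsto (fun x : ℕ => Real.log x * (mu X 2 x - s2)) atTop (nhds 0) := by
    refine h2.tendsto_div_nhds_zero.congr' ?_
    filter_upwards [hevL] with x ⟨hLne, _⟩
    field_simp
  have T4 : Tendsto (fun x : ℕ => mu X 2 x) atTop (nhds s2) := by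
    have h0 : Tendsto (fun x : ℕ => mu X 2 x - s2) atTop (nhds 0) := by
      have hmul := T3.mul hinvL
      rw [mul_zero] at hmul
      refine hmul.congr' ?_
      filter_upwards [hevL] with x ⟨hLne, _⟩
      rw [mul_comm (Real.log x), mul_assoc, mul_inv_cancel₀ hLne, mul_one]
    have := h0.add (tendsto_const_nhds (x := s2))
    simpa using this
  have hdrift : Tendsto (fun x : ℕ => ν*((x:ℝ)*mu X 1 x)
      - γ*(Real.log x*((x:ℝ)*mu X 1 x - c)) + γ*(γ+1)/2*(Real.log x*(mu X 2 x - s2))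
      - ν*(2*γ+1)/2*(mu X 2 x)) atTop
      (nhds (ν*c - γ*0 + γ*(γ+1)/2*0 - ν*(2*γ+1)/2*s2)) :=
    (((T1.const_mul ν).sub (T2.const_mul γ)).add (T3.const_mul (γ*(γ+1)/2))).sub
      (T4.const_mul (ν*(2*γ+1)/2))
  have hremabs : Tendsto (fun x : ℕ => ∑ k ∈ Finset.range (2*B+1),
      |rho γ ν ((k:ℝ)-B) (x:ℝ)|) atTop (nhds 0) := by
    have h := tendsto_finset_sum (Finset.range (2*B+1))
      (fun k (_ : k ∈ Finset.range (2*B+1)) => by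
        simpa using ((rho_tendsto γ ν ((k:ℝ)-B)).comp tendsto_natCast_atTop_atTop).abs)
    simpa using h
  have hrem : Tendsto (fun x : ℕ => ∑ k ∈ Finset.range (2*B+1),
      (X.p x (x - B + k)).toReal * rho γ ν ((k:ℝ)-B) (x:ℝ)) atTop (nhds 0) := by
    apply squeeze_zero_norm _ hremabs
    intro x
    calc ‖∑ k ∈ Finset.range (2*B+1),
        (X.p x (x - B + k)).toReal * rho γ ν ((k:ℝ)-B) (x:ℝ)‖
        ≤ ∑ k ∈ Finset.range (2*B+1),
          ‖(X.p x (x - B + k)).toReal * rho γ ν ((k:ℝ)-B) (x:ℝ)‖ := norm_sum_le _ _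
      _ ≤ ∑ k ∈ Finset.range (2*B+1), |rho γ ν ((k:ℝ)-B) (x:ℝ)| := by
          refine Finset.sum_le_sum fun k _ => ?_
          have hq0 : (0:ℝ) ≤ (X.p x (x - B + k)).toReal := ENNReal.toReal_nonneg
          have hq1 : (X.p x (x - B + k)).toReal ≤ 1 := by
            have := ENNReal.toReal_mono (by simp) (p_le_one X x (x - B + k))
            simpa using this
          rw [Real.norm_eq_abs, abs_mul, abs_of_nonneg hq0]
          exact mul_le_of_le_one_left (abs_nonneg _) hq1
  have key : Tendsto (fun x : ℕ => (x:ℝ)^2 * Real.log x / lyap γ ν x *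
      (∑' j : ℕ, (X.p x j).toReal * (lyap γ ν (j:ℝ) - lyap γ ν (x:ℝ)))) atTop
      (nhds (ν*(s2-2*c)/2)) := by
    have hγid : (γ+1)*s2 = 2*c := by
      rw [hγdef]; field_simp; ring
    have hsum := hrem.add hdrift
    have hval : (0:ℝ) + (ν*c - γ*0 + γ*(γ+1)/2*0 - ν*(2*γ+1)/2*s2) = ν*(s2-2*c)/2 := by
      rw [hγdef]; field_simp; ring
    rw [hval] at hsum
    refine hsum.congr' ?_
    filter_upwards [eventually_ge_atTop (2*B+3)] with x hx
    rw [G_eq X B hB γ ν x hx]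
    linear_combination (-(γ*Real.log (x:ℝ)/2)) * hγid
  constructor
  · intro hν
    have hKneg : ν*(s2-2*c)/2 < 0 := by nlinarith
    have hev := key.eventually_lt_const hKneg
    obtain ⟨x0, hx0⟩ := eventually_atTop.1 (hev.and (eventually_ge_atTop 3))
    refine ⟨x0, fun x hx => ?_⟩
    obtain ⟨hGx, hx3⟩ := hx0 x hx
    have hx3' : (3:ℝ) ≤ (x:ℝ) := by exact_mod_cast hx3
    have hcoef : 0 < (x:ℝ)^2 * Real.log x / lyap γ ν x :=
      div_pos (mul_pos (pow_pos (by linarith) 2) (Real.log_pos (by linarith)))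
        (lyap_pos _ _ _)
    by_contra h
    push_neg at h
    exact absurd (mul_pos hcoef h) (by linarith)
  · intro hν
    have hKpos : 0 < ν*(s2-2*c)/2 := by nlinarith
    have hev := key.eventually_const_lt hKpos
    obtain ⟨x0, hx0⟩ := eventually_atTop.1 (hev.and (eventually_ge_atTop 3))
    refine ⟨x0, fun x hx => ?_⟩
    obtain ⟨hGx, hx3⟩ := hx0 x hx
    have hx3' : (3:ℝ) ≤ (x:ℝ) := by exact_mod_cast hx3
    have hcoef : 0 < (x:ℝ)^2 * Real.log x / lyap γ ν x :=
      div_pos (mul_pos (pow_pos (by linarith) 2) (Real.log_pos (by linarith)))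
        (lyap_pos _ _ _)
    by_contra h
    push_neg at h
    exact absurd (mul_neg_of_pos_of_neg hcoef h) (by linarith)
end
end

section
/- Let X be an irreducible, time-homogeneous Markov chain on ℤ₊ satisfying (B), (I) and (L). Then for every a ∈ ℤ₊ and every u ∈ I_a, the limit θ_a(u) := lim_{x→∞} Pr_x( X_{η_{I_a}} = u | η_{I_a} < ∞ ) exists. Moreover, there exist constants C < ∞ and b > 0 (independent of a) such that for all a ∈ ℤ₊ and all ℓ > 0, sup_{x ≥ a+B+ℓ} sup_{u ∈ I_a} | Pr_x( X_{η_{I_a}} = u | η_{I_a} < ∞ ) − θ_a(u) | ≤ C e^{−bℓ}. -/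
open MeasureTheory Filter Set Classical Asymptotics

noncomputable section

variable {S : Type} [MeasurableSpace S]

/-- `η_I := inf {n ≥ 0 : X_n ∈ I}` (`∞` if no such `n`). -/
def etaTime (I : Set ℕ) (ω : ℕ → ℕ) : ℕ∞ :=
  sInf {t : ℕ∞ | ∃ n : ℕ, (n : ℕ∞) = t ∧ ω n ∈ I}

/-- The entrance probability `Pr_x(X_{η_{I_a}} = u | η_{I_a} < ∞)`, where
`I_a = [a, a+B] ∩ ℤ`. -/
def entranceProb (X : MarkovChain ℕ) (B a x u : ℕ) : ℝ :=
  (X.law x {ω | ∃ n : ℕ, etaTime (Set.Icc a (a + B)) ω = (n : ℕ∞) ∧ ω n = u} /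
    X.law x {ω | etaTime (Set.Icc a (a + B)) ω ≠ ⊤}).toReal

/-- `Pr_x(η_{I_a} < ∞)` where `I_a = [a, a+B] ∩ ℤ`. -/
def etaHitProb (X : MarkovChain ℕ) (B a x : ℕ) : ENNReal :=
  X.law x {ω | etaTime (Set.Icc a (a + B)) ω ≠ ⊤}

namespace P57

/-! ### etaTime basics -/

lemma etaTime_eq_top_iff {I : Set ℕ} {ω : ℕ → ℕ} :
    etaTime I ω = ⊤ ↔ ∀ k, ω k ∉ I := by
  constructor
  · intro h k hk
    have hmem : (↑k : ℕ∞) ∈ {t : ℕ∞ | ∃ n : ℕ, (n : ℕ∞) = t ∧ ω n ∈ I} := ⟨k, rfl, hk⟩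
    have h2 : etaTime I ω ≤ (k : ℕ∞) := sInf_le hmem
    rw [h] at h2
    simp at h2
  · intro h
    have : {t : ℕ∞ | ∃ n : ℕ, (n : ℕ∞) = t ∧ ω n ∈ I} = ∅ := by
      ext t; simp only [Set.mem_setOf_eq, Set.mem_empty_iff_false, iff_false, not_exists]
      rintro n ⟨rfl, hn⟩
      exact h n hn
    rw [etaTime, this, sInf_empty]

lemma etaTime_eq_coe_iff {I : Set ℕ} {ω : ℕ → ℕ} {n : ℕ} :
    etaTime I ω = (n : ℕ∞) ↔ ω n ∈ I ∧ ∀ k < n, ω k ∉ I := by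
  constructor
  · intro h
    by_cases hex : ∃ k, ω k ∈ I
    · have hmem : (↑(Nat.find hex) : ℕ∞) ∈ {t : ℕ∞ | ∃ n : ℕ, (n : ℕ∞) = t ∧ ω n ∈ I} :=
        ⟨Nat.find hex, rfl, Nat.find_spec hex⟩
      have hfind : etaTime I ω = (Nat.find hex : ℕ∞) := by
        apply le_antisymm (sInf_le hmem)
        apply le_sInf
        rintro t ⟨j, rfl, hj⟩
        have : Nat.find hex ≤ j := Nat.find_le hj
        exact_mod_cast this
      rw [hfind] at h
      have hn : Nat.find hex = n := by exact_mod_cast h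
      refine ⟨hn ▸ Nat.find_spec hex, fun k hk => ?_⟩
      exact Nat.find_min hex (hn ▸ hk)
    · push_neg at hex
      rw [etaTime_eq_top_iff.mpr hex] at h
      simp at h
  · rintro ⟨h1, h2⟩
    have hmem : (↑n : ℕ∞) ∈ {t : ℕ∞ | ∃ k : ℕ, (k : ℕ∞) = t ∧ ω k ∈ I} := ⟨n, rfl, h1⟩
    apply le_antisymm (sInf_le hmem)
    apply le_sInf
    rintro t ⟨j, rfl, hj⟩
    have : n ≤ j := not_lt.mp (fun hlt => h2 j hlt hj)
    exact_mod_cast this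

lemma etaTime_ne_top_iff {I : Set ℕ} {ω : ℕ → ℕ} :
    etaTime I ω ≠ ⊤ ↔ ∃ k, ω k ∈ I := by
  rw [Ne, etaTime_eq_top_iff]
  push_neg
  rfl

/-! ### paths -/

def pos (x : ℕ) (l : List ℕ) (k : ℕ) : ℕ := (x :: l).getD k 0

def Cyl (x : ℕ) (l : List ℕ) : Set (ℕ → ℕ) := {ω | ∀ k ≤ l.length, ω k = pos x l k}

variable (X : MarkovChain ℕ)

def wt (x : ℕ) (l : List ℕ) : ENNReal :=
  ∏ k ∈ Finset.range l.length, X.p (pos x l k) (pos x l (k + 1))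

lemma pos_zero (x : ℕ) (l : List ℕ) : pos x l 0 = x := rfl

lemma pos_succ (x : ℕ) (l : List ℕ) (i : ℕ) : pos x l (i + 1) = l.getD i 0 := rfl

lemma law_cyl_list (x : ℕ) (l : List ℕ) : X.law x (Cyl x l) = wt X x l :=
  X.law_cyl x l.length (pos x l) rfl

lemma meas_coord_mem (k : ℕ) (A : Set ℕ) : MeasurableSet {ω : ℕ → ℕ | ω k ∈ A} := by
  have : {ω : ℕ → ℕ | ω k ∈ A} = (fun ω : ℕ → ℕ => ω k) ⁻¹' A := rfl
  rw [this]; exact measurable_pi_apply k trivial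

lemma meas_coord (k c : ℕ) : MeasurableSet {ω : ℕ → ℕ | ω k = c} :=
  meas_coord_mem k {c}

lemma meas_cyl (x : ℕ) (l : List ℕ) : MeasurableSet (Cyl x l) := by
  have : Cyl x l = ⋂ (k : ℕ) (_ : k ≤ l.length), {ω : ℕ → ℕ | ω k = pos x l k} := by
    ext ω; simp [Cyl]
  rw [this]
  exact MeasurableSet.iInter fun k => MeasurableSet.iInter fun _ => meas_coord _ _

lemma meas_eta_eq (I : Set ℕ) (n : ℕ) : MeasurableSet {ω : ℕ → ℕ | etaTime I ω = (n : ℕ∞)} := by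
  have : {ω : ℕ → ℕ | etaTime I ω = (n : ℕ∞)} =
      {ω : ℕ → ℕ | ω n ∈ I} ∩ ⋂ (k : ℕ) (_ : k < n), {ω : ℕ → ℕ | ω k ∈ I}ᶜ := by
    ext ω
    simp only [Set.mem_setOf_eq, Set.mem_inter_iff, Set.mem_iInter, Set.mem_compl_iff,
      etaTime_eq_coe_iff]
  rw [this]
  exact (meas_coord_mem n I).inter
    (MeasurableSet.iInter fun k => MeasurableSet.iInter fun _ => (meas_coord_mem k I).compl)

lemma meas_Ev (I : Set ℕ) (u : ℕ) :
    MeasurableSet {ω : ℕ → ℕ | ∃ n : ℕ, etaTime I ω = (n : ℕ∞) ∧ ω n = u} := by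
  have : {ω : ℕ → ℕ | ∃ n : ℕ, etaTime I ω = (n : ℕ∞) ∧ ω n = u} =
      ⋃ n : ℕ, ({ω : ℕ → ℕ | etaTime I ω = (n : ℕ∞)} ∩ {ω : ℕ → ℕ | ω n = u}) := by
    ext ω; simp [Set.mem_setOf_eq]
  rw [this]
  exact MeasurableSet.iUnion fun n => (meas_eta_eq I n).inter (meas_coord n u)

lemma meas_Hit (I : Set ℕ) : MeasurableSet {ω : ℕ → ℕ | etaTime I ω ≠ ⊤} := by
  have : {ω : ℕ → ℕ | etaTime I ω ≠ ⊤} = ⋃ n : ℕ, {ω : ℕ → ℕ | ω n ∈ I} := by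
    ext ω; simp [etaTime_ne_top_iff]
  rw [this]
  exact MeasurableSet.iUnion fun n => meas_coord_mem n I

/-! ### the law of full sets and partitions -/

lemma law_zero_full (x : ℕ) : X.law x {ω | ω 0 = x} = 1 := by
  have h := X.law_cyl x 0 (fun _ => x) rfl
  have hs : {ω : ℕ → ℕ | ∀ k ≤ 0, ω k = x} = {ω | ω 0 = x} := by
    ext ω; simp [Nat.le_zero]
  rw [hs] at h
  simpa using h

lemma law_inter_full {x : ℕ} {E : Set (ℕ → ℕ)} :
    X.law x E = X.law x (E ∩ {ω | ω 0 = x}) := by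
  haveI := X.law_prob x
  refine le_antisymm ?_ (measure_mono Set.inter_subset_left)
  have h0 : X.law x {ω : ℕ → ℕ | ω 0 = x}ᶜ = 0 := by
    rw [measure_compl (meas_coord 0 x) (measure_ne_top _ _), law_zero_full, measure_univ]
    simp
  calc X.law x E ≤ X.law x (E ∩ {ω | ω 0 = x}) + X.law x (E \ {ω | ω 0 = x}) :=
        measure_le_inter_add_diff _ _ _
    _ ≤ X.law x (E ∩ {ω | ω 0 = x}) + X.law x {ω : ℕ → ℕ | ω 0 = x}ᶜ := by
        gcongr
        exact Set.diff_subset_compl _ _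
    _ = X.law x (E ∩ {ω | ω 0 = x}) := by rw [h0, add_zero]

lemma law_eq_tsum_cyl {x : ℕ} {E : Set (ℕ → ℕ)} (P : List ℕ → Prop)
    (hdis : ∀ l l', P l → P l' → l ≠ l' → Disjoint (Cyl x l) (Cyl x l'))
    (hcover : E ∩ {ω | ω 0 = x} = ⋃ l : {l : List ℕ // P l}, Cyl x (l : List ℕ)) :
    X.law x E = ∑' l : {l : List ℕ // P l}, wt X x (l : List ℕ) := by
  rw [law_inter_full, hcover,
    measure_iUnion (fun l l' hne => hdis _ _ l.2 l'.2 (fun h => hne (Subtype.ext h)))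
      (fun l => meas_cyl x l)]
  exact tsum_congr fun l => law_cyl_list X x l

/-! ### first-entry path predicates -/

def ok (B x : ℕ) (l : List ℕ) : Prop :=
  ∀ k < l.length, ((pos x l (k + 1) : ℤ) - (pos x l k : ℤ)).natAbs ≤ B

def fe0 (B a u x : ℕ) (l : List ℕ) : Prop :=
  (∀ k < l.length, pos x l k ∉ Set.Icc a (a + B)) ∧ pos x l l.length = u ∧
    u ∈ Set.Icc a (a + B)

def fe (B a u x : ℕ) (l : List ℕ) : Prop := fe0 B a u x l ∧ ok B x l

def co0 (n j x : ℕ) (l : List ℕ) : Prop := l.length = n ∧ pos x l n = j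

def co (B n j x : ℕ) (l : List ℕ) : Prop := co0 n j x l ∧ ok B x l

def nu (B a x u : ℕ) : ENNReal :=
  X.law x {ω | ∃ n : ℕ, etaTime (Set.Icc a (a + B)) ω = (n : ℕ∞) ∧ ω n = u}

def hh (B a x : ℕ) : ENNReal :=
  X.law x {ω | etaTime (Set.Icc a (a + B)) ω ≠ ⊤}

lemma pos_ofFn (x n : ℕ) (ω : ℕ → ℕ) (hω : ω 0 = x) :
    ∀ k ≤ n, pos x (List.ofFn fun i : Fin n => ω (i + 1)) k = ω k := by
  intro k hk
  match k with
  | 0 => simpa [pos_zero] using hω.symm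
  | (i + 1) =>
    have hi : i < n := by omega
    rw [pos_succ]
    rw [List.getD_eq_getElem _ _ (by simpa using hi)]
    simp

lemma eq_of_pos_eq {x : ℕ} {l l' : List ℕ} (hlen : l.length = l'.length)
    (h : ∀ k ≤ l.length, pos x l k = pos x l' k) : l = l' := by
  apply List.ext_getElem hlen
  intro i h1 h2
  have := h (i + 1) (by omega)
  rw [pos_succ, pos_succ, List.getD_eq_getElem _ _ h1, List.getD_eq_getElem _ _ h2] at this
  exact this

lemma disj_fe0 {B a u x : ℕ} : ∀ l l', fe0 B a u x l → fe0 B a u x l' → l ≠ l' →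
    Disjoint (Cyl x l) (Cyl x l') := by
  have key : ∀ l l', fe0 B a u x l → fe0 B a u x l' → l ≠ l' → l.length ≤ l'.length →
      Disjoint (Cyl x l) (Cyl x l') := by
    intro l l' h1 h2 hne hle
    rcases eq_or_lt_of_le hle with heq | hlt
    · have : ¬ ∀ k ≤ l.length, pos x l k = pos x l' k := by
        intro hall; exact hne (eq_of_pos_eq heq hall)
      push_neg at this
      obtain ⟨k, hk, hkne⟩ := this
      rw [Set.disjoint_left]
      intro ω hω hω'
      exact hkne ((hω k hk).symm.trans (hω' k (by omega)))
    · rw [Set.disjoint_left]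
      intro ω hω hω'
      have e1 : ω l.length = u := by rw [hω l.length le_rfl, h1.2.1]
      have e2 : ω l.length ∉ Set.Icc a (a + B) := by
        rw [hω' l.length (le_of_lt hlt)]
        exact h2.1 l.length hlt
      rw [e1] at e2
      exact e2 h1.2.2
  intro l l' h1 h2 hne
  rcases le_total l.length l'.length with hle | hle
  · exact key l l' h1 h2 hne hle
  · exact (key l' l h2 h1 (Ne.symm hne) hle).symm

lemma disj_co0 {n j x : ℕ} : ∀ l l', co0 n j x l → co0 n j x l' → l ≠ l' →
    Disjoint (Cyl x l) (Cyl x l') := by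
  intro l l' h1 h2 hne
  have : ¬ ∀ k ≤ l.length, pos x l k = pos x l' k := by
    intro hall; exact hne (eq_of_pos_eq (h1.1.trans h2.1.symm) hall)
  push_neg at this
  obtain ⟨k, hk, hkne⟩ := this
  rw [Set.disjoint_left]
  intro ω hω hω'
  exact hkne ((hω k hk).symm.trans (hω' k (by rw [h2.1, ← h1.1]; exact hk)))

lemma cover_Ev (B a u x : ℕ) :
    {ω : ℕ → ℕ | ∃ n : ℕ, etaTime (Set.Icc a (a + B)) ω = (n : ℕ∞) ∧ ω n = u} ∩
        {ω | ω 0 = x} =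
      ⋃ l : {l : List ℕ // fe0 B a u x l}, Cyl x (l : List ℕ) := by
  ext ω
  simp only [Set.mem_inter_iff, Set.mem_setOf_eq, Set.mem_iUnion]
  constructor
  · rintro ⟨⟨n, hn, hωn⟩, hω0⟩
    obtain ⟨hmem, hnot⟩ := etaTime_eq_coe_iff.mp hn
    refine ⟨⟨List.ofFn fun i : Fin n => ω (i + 1), ?_, ?_, ?_⟩, ?_⟩
    · intro k hk
      rw [List.length_ofFn] at hk
      rw [pos_ofFn x n ω hω0 k (le_of_lt hk)]
      exact hnot k hk
    · rw [List.length_ofFn, pos_ofFn x n ω hω0 n le_rfl, hωn]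
    · rw [← hωn]; exact hωn ▸ (hωn ▸ hmem)
    · intro k hk
      rw [List.length_ofFn] at hk
      exact (pos_ofFn x n ω hω0 k hk).symm
  · rintro ⟨⟨l, hfe⟩, hω⟩
    have hω0 : ω 0 = x := by rw [hω 0 (Nat.zero_le _), pos_zero]
    refine ⟨⟨l.length, ?_, ?_⟩, hω0⟩
    · rw [etaTime_eq_coe_iff]
      constructor
      · rw [hω l.length le_rfl, hfe.2.1]; exact hfe.2.2
      · intro k hk
        rw [hω k (le_of_lt hk)]
        exact hfe.1 k hk
    · rw [hω l.length le_rfl, hfe.2.1]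

lemma cover_co (n j x : ℕ) :
    {ω : ℕ → ℕ | ω n = j} ∩ {ω | ω 0 = x} =
      ⋃ l : {l : List ℕ // co0 n j x l}, Cyl x (l : List ℕ) := by
  ext ω
  simp only [Set.mem_inter_iff, Set.mem_setOf_eq, Set.mem_iUnion]
  constructor
  · rintro ⟨hωn, hω0⟩
    refine ⟨⟨List.ofFn fun i : Fin n => ω (i + 1), by simp, ?_⟩, ?_⟩
    · rw [pos_ofFn x n ω hω0 n le_rfl, hωn]
    · intro k hk
      rw [List.length_ofFn] at hk
      exact (pos_ofFn x n ω hω0 k hk).symm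
  · rintro ⟨⟨l, hco⟩, hω⟩
    have hω0 : ω 0 = x := by rw [hω 0 (Nat.zero_le _), pos_zero]
    obtain ⟨hlen, hpos⟩ := hco
    subst hlen
    exact ⟨by rw [hω l.length le_rfl, hpos], hω0⟩

/-! ### zero weight for big jumps -/

lemma meas_two (Q : ℕ → ℕ → Prop) : MeasurableSet {ω : ℕ → ℕ | Q (ω 0) (ω 1)} := by
  have : {ω : ℕ → ℕ | Q (ω 0) (ω 1)} =
      ⋃ c : ℕ, ({ω : ℕ → ℕ | ω 0 = c} ∩ {ω : ℕ → ℕ | ω 1 ∈ {d | Q c d}}) := by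
    ext ω; simp only [Set.mem_setOf_eq, Set.mem_iUnion, Set.mem_inter_iff]
    constructor
    · intro h; exact ⟨ω 0, rfl, h⟩
    · rintro ⟨c, rfl, h⟩; exact h
  rw [this]
  exact MeasurableSet.iUnion fun c => (meas_coord 0 c).inter (meas_coord_mem 1 _)

lemma p_zero (hB : AssumptionB X B) {i j : ℕ} (h : B < ((j : ℤ) - (i : ℤ)).natAbs) :
    X.p i j = 0 := by
  haveI := X.law_prob i
  have h1 : X.law i (Cyl i [j]) = X.p i j := by
    rw [law_cyl_list]
    simp [wt, pos]
  have hms : MeasurableSet {ω : ℕ → ℕ | ((ω 1 : ℤ) - (ω 0 : ℤ)).natAbs ≤ B} :=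
    meas_two (fun c d => ((d : ℤ) - (c : ℤ)).natAbs ≤ B)
  have h2 : X.law i {ω : ℕ → ℕ | ((ω 1 : ℤ) - (ω 0 : ℤ)).natAbs ≤ B}ᶜ = 0 := by
    rw [measure_compl hms (measure_ne_top _ _), hB i 0, measure_univ]
    simp
  have hsub : Cyl i [j] ⊆ {ω : ℕ → ℕ | ((ω 1 : ℤ) - (ω 0 : ℤ)).natAbs ≤ B}ᶜ := by
    intro ω hω
    have e0 : ω 0 = i := by simpa [pos] using hω 0 (by simp [Cyl])
    have e1 : ω 1 = j := by simpa [pos] using hω 1 (by simp [Cyl])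
    simp only [Set.mem_compl_iff, Set.mem_setOf_eq, e0, e1, not_le]
    omega
  rw [← h1]
  exact le_antisymm (le_trans (measure_mono hsub) (le_of_eq h2)) zero_le

lemma wt_zero (hB : AssumptionB X B) {x : ℕ} {l : List ℕ} (h : ¬ ok B x l) :
    wt X x l = 0 := by
  rw [ok] at h
  push_neg at h
  obtain ⟨k, hk, hkB⟩ := h
  exact Finset.prod_eq_zero (Finset.mem_range.mpr hk) (p_zero X hB (by omega))

lemma tsum_wt_switch {x : ℕ} {P Q : List ℕ → Prop} (hQP : ∀ l, Q l → P l)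
    (hz : ∀ l, P l → ¬ Q l → wt X x l = 0) :
    ∑' l : {l : List ℕ // P l}, wt X x (l : List ℕ)
      = ∑' l : {l : List ℕ // Q l}, wt X x (l : List ℕ) := by
  have h1 : ∑' l : {l : List ℕ // P l}, wt X x (l : List ℕ)
      = ∑' l : List ℕ, Set.indicator {l : List ℕ | P l} (wt X x) l :=
    tsum_subtype {l : List ℕ | P l} (wt X x)
  have h2 : ∑' l : {l : List ℕ // Q l}, wt X x (l : List ℕ)
      = ∑' l : List ℕ, Set.indicator {l : List ℕ | Q l} (wt X x) l :=
    tsum_subtype {l : List ℕ | Q l} (wt X x)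
  rw [h1, h2]
  apply tsum_congr
  intro l
  by_cases hP : P l <;> by_cases hQ : Q l <;>
    simp only [Set.indicator, Set.mem_setOf_eq, hP, hQ, if_true, if_false]
  · exact hz l hP hQ
  · exact absurd (hQP l hQ) hP

lemma nu_eq (hB : AssumptionB X B) (a x u : ℕ) :
    nu X B a x u = ∑' l : {l : List ℕ // fe B a u x l}, wt X x (l : List ℕ) := by
  rw [nu, law_eq_tsum_cyl X (fe0 B a u x) disj_fe0 (cover_Ev B a u x)]
  exact tsum_wt_switch X (fun l hQ => hQ.1)
    (fun l hP hnQ => wt_zero X hB (fun hok => hnQ ⟨hP, hok⟩))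

lemma law_coord_eq (hB : AssumptionB X B) (n j x : ℕ) :
    X.law x {ω | ω n = j} = ∑' l : {l : List ℕ // co B n j x l}, wt X x (l : List ℕ) := by
  rw [law_eq_tsum_cyl X (co0 n j x) disj_co0 (cover_co n j x)]
  exact tsum_wt_switch X (fun l hQ => hQ.1)
    (fun l hP hnQ => wt_zero X hB (fun hok => hnQ ⟨hP, hok⟩))

/-! ### hh facts -/

lemma hh_eq_tsum_nu (a x : ℕ) : hh X B a x = ∑' u : ℕ, nu X B a x u := by
  rw [hh]
  have hcover : {ω : ℕ → ℕ | etaTime (Set.Icc a (a + B)) ω ≠ ⊤} =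
      ⋃ u : ℕ, {ω : ℕ → ℕ | ∃ n : ℕ, etaTime (Set.Icc a (a + B)) ω = (n : ℕ∞) ∧ ω n = u} := by
    ext ω
    simp only [Set.mem_setOf_eq, Set.mem_iUnion]
    constructor
    · intro h
      have hex : ∃ k, ω k ∈ Set.Icc a (a + B) := etaTime_ne_top_iff.mp h
      have : etaTime (Set.Icc a (a + B)) ω = (Nat.find hex : ℕ∞) :=
        etaTime_eq_coe_iff.mpr ⟨Nat.find_spec hex, fun k hk => Nat.find_min hex hk⟩
      exact ⟨ω (Nat.find hex), Nat.find hex, this, rfl⟩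
    · rintro ⟨u, n, hn, _⟩
      rw [hn]
      simp
  rw [hcover, measure_iUnion ?_ (fun u => meas_Ev _ u)]
  · rfl
  · intro u u' hne
    rw [Function.onFun, Set.disjoint_left]
    rintro ω ⟨n, hn, hu⟩ ⟨n', hn', hu'⟩
    have : (n : ℕ∞) = (n' : ℕ∞) := hn.symm.trans hn'
    have hnn : n = n' := by exact_mod_cast this
    exact hne (hu.symm.trans (hnn ▸ hu'))

lemma nu_zero_of_not_mem {B a u : ℕ} (x : ℕ) (h : u ∉ Set.Icc a (a + B)) :
    nu X B a x u = 0 := by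
  rw [nu]
  have hemp : {ω : ℕ → ℕ | ∃ n : ℕ, etaTime (Set.Icc a (a + B)) ω = (n : ℕ∞) ∧ ω n = u} = ∅ := by
    ext ω
    simp only [Set.mem_setOf_eq, Set.mem_empty_iff_false, iff_false, not_exists]
    rintro n ⟨hn, hu⟩
    exact h (hu ▸ (etaTime_eq_coe_iff.mp hn).1)
  rw [hemp]
  exact measure_empty

lemma nu_le_hh (a x u : ℕ) : nu X B a x u ≤ hh X B a x := by
  apply measure_mono
  rintro ω ⟨n, hn, _⟩
  rw [Set.mem_setOf_eq, hn]
  simp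

lemma hh_le_one (a x : ℕ) : hh X B a x ≤ 1 := by
  haveI := X.law_prob x
  exact prob_le_one

lemma hh_ne_top (a x : ℕ) : hh X B a x ≠ ⊤ := ne_top_of_le_ne_top ENNReal.one_ne_top (hh_le_one X a x)

lemma nu_ne_top (a x u : ℕ) : nu X B a x u ≠ ⊤ :=
  ne_top_of_le_ne_top (hh_ne_top X a x) (nu_le_hh X a x u)

lemma hh_pos (hirr : X.Irred) (B a x : ℕ) : 0 < hh X B a x := by
  obtain ⟨n, hlaw⟩ := hirr x a
  refine lt_of_lt_of_le hlaw (measure_mono ?_)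
  intro ω hω
  rw [Set.mem_setOf_eq] at hω ⊢
  rw [etaTime_ne_top_iff]
  exact ⟨n, by rw [hω]; simp⟩

/-! ### append / take / drop -/

lemma pos_append_left (x : ℕ) (l₁ l₂ : List ℕ) {k : ℕ} (hk : k ≤ l₁.length) :
    pos x (l₁ ++ l₂) k = pos x l₁ k := by
  show ((x :: l₁) ++ l₂).getD k 0 = (x :: l₁).getD k 0
  exact List.getD_append _ _ _ _ (by simp; omega)

lemma pos_append_right (x : ℕ) (l₁ l₂ : List ℕ) (k : ℕ) :
    pos x (l₁ ++ l₂) (l₁.length + k) = pos (pos x l₁ l₁.length) l₂ k := by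
  cases k with
  | zero => rw [Nat.add_zero]; exact pos_append_left x l₁ l₂ le_rfl
  | succ k =>
    show ((x :: l₁) ++ l₂).getD (l₁.length + (k + 1)) 0 = _
    rw [List.getD_append_right (x :: l₁) l₂ 0 _ (by simp)]
    rw [pos_succ]
    congr 1
    simp only [List.length_cons]
    omega

lemma wt_append (x : ℕ) (l₁ l₂ : List ℕ) :
    wt X x (l₁ ++ l₂) = wt X x l₁ * wt X (pos x l₁ l₁.length) l₂ := by
  unfold wt
  rw [List.length_append, Finset.prod_range_add]
  congr 1
  · refine Finset.prod_congr rfl fun k hk => ?_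
    rw [Finset.mem_range] at hk
    rw [pos_append_left x l₁ l₂ (by omega), pos_append_left x l₁ l₂ (by omega)]
  · refine Finset.prod_congr rfl fun k hk => ?_
    rw [show l₁.length + k + 1 = l₁.length + (k + 1) from by omega, pos_append_right,
      pos_append_right]

lemma length_take_of_le {l : List ℕ} {k : ℕ} (hk : k ≤ l.length) : (l.take k).length = k := by
  simp [hk]

lemma pos_take (x : ℕ) {l : List ℕ} {k j : ℕ} (hk : k ≤ l.length) (hj : j ≤ k) :
    pos x (l.take k) j = pos x l j := by
  conv_rhs => rw [← List.take_append_drop k l]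
  rw [pos_append_left x _ _ (by rw [length_take_of_le hk]; exact hj)]

lemma pos_drop (x : ℕ) {l : List ℕ} {k : ℕ} (hk : k ≤ l.length) (j : ℕ) :
    pos (pos x l k) (l.drop k) j = pos x l (k + j) := by
  conv_rhs => rw [← List.take_append_drop k l]
  rw [show k + j = (l.take k).length + j from by rw [length_take_of_le hk]]
  rw [pos_append_right]
  rw [length_take_of_le hk, pos_take x hk le_rfl]

lemma ok_append {B x : ℕ} {l₁ l₂ : List ℕ} (h1 : ok B x l₁)
    (h2 : ok B (pos x l₁ l₁.length) l₂) : ok B x (l₁ ++ l₂) := by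
  intro k hk
  rw [List.length_append] at hk
  rcases lt_or_ge k l₁.length with h | h
  · rw [pos_append_left x l₁ l₂ (by omega : k + 1 ≤ l₁.length),
      pos_append_left x l₁ l₂ (by omega : k ≤ l₁.length)]
    exact h1 k h
  · obtain ⟨j, rfl⟩ : ∃ j, k = l₁.length + j := ⟨k - l₁.length, by omega⟩
    rw [show l₁.length + j + 1 = l₁.length + (j + 1) from by omega, pos_append_right,
      pos_append_right]
    exact h2 j (by omega)

lemma ok_take {B x : ℕ} {l : List ℕ} {k : ℕ} (hk : k ≤ l.length) (h : ok B x l) :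
    ok B x (l.take k) := by
  intro i hi
  rw [length_take_of_le hk] at hi
  rw [pos_take x hk (by omega : i + 1 ≤ k), pos_take x hk (by omega : i ≤ k)]
  exact h i (by omega)

lemma ok_drop {B x : ℕ} {l : List ℕ} {k : ℕ} (hk : k ≤ l.length) (h : ok B x l) :
    ok B (pos x l k) (l.drop k) := by
  intro i hi
  rw [List.length_drop] at hi
  rw [pos_drop x hk, pos_drop x hk]
  rw [show k + (i + 1) = (k + i) + 1 from by omega]
  exact h (k + i) (by omega)

/-! ### position bounds -/

lemma stay_above {B w v x : ℕ} {l : List ℕ} (hx : w + B + 1 ≤ x) (hfe : fe B w v x l) :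
    ∀ k < l.length, w + B + 1 ≤ pos x l k := by
  intro k
  induction k with
  | zero => intro _; rw [pos_zero]; exact hx
  | succ k ih =>
    intro hk
    have hk' : k < l.length := by omega
    have h1 := ih hk'
    have hstep := hfe.2 k hk'
    have hnot := hfe.1.1 (k + 1) hk
    rw [Set.mem_Icc] at hnot
    omega

lemma pos_ge_start {B x : ℕ} {l : List ℕ} (hok : ok B x l) :
    ∀ k ≤ l.length, (x : ℤ) ≤ (pos x l k : ℤ) + k * B := by
  intro k
  induction k with
  | zero => intro _; rw [pos_zero]; simp
  | succ k ih =>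
    intro hk
    have h1 := ih (by omega)
    have hstep := hok k (by omega)
    have hs2 : (pos x l k : ℤ) - B ≤ (pos x l (k + 1) : ℤ) := by omega
    have hexp : ((k : ℤ) + 1) * (B : ℤ) = (k : ℤ) * B + B := by ring
    push_cast
    push_cast at h1
    rw [hexp]
    linarith

/-! ### crossing analysis -/

lemma cross_exists {B a u w x : ℕ} {L : List ℕ} (hw : a + B + 1 ≤ w) (hx : w + B + 1 ≤ x)
    (hL : fe B a u x L) :
    ∃ k, k < L.length ∧ pos x L k ∈ Set.Icc w (w + B) ∧ ∀ j < k, w + B + 1 ≤ pos x L j := by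
  have hu := hL.1.2.2
  rw [Set.mem_Icc] at hu
  have hex : ∃ k, k ≤ L.length ∧ pos x L k ≤ w + B := by
    refine ⟨L.length, le_rfl, ?_⟩
    rw [hL.1.2.1]
    omega
  classical
  have hspec := Nat.find_spec hex
  set k := Nat.find hex with hkdef
  have hhigh : ∀ j < k, w + B + 1 ≤ pos x L j := by
    intro j hj
    have hmin := Nat.find_min hex hj
    have hjlen : j ≤ L.length := le_trans (le_of_lt hj) hspec.1
    omega
  have hk1 : 1 ≤ k := by
    by_contra h
    have hk0 : k = 0 := by omega
    have h2 := hspec.2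
    rw [hk0, pos_zero] at h2
    omega
  have hklen : k ≤ L.length := hspec.1
  have hstep := hL.2 (k - 1) (by omega)
  have hprev := hhigh (k - 1) (by omega)
  have hidx : (k - 1) + 1 = k := by omega
  rw [hidx] at hstep
  have hklow : w ≤ pos x L k := by omega
  have hkne : k < L.length := by
    rcases eq_or_lt_of_le hklen with he | h
    · exfalso
      have := hL.1.2.1
      rw [← he] at this
      omega
    · exact h
  exact ⟨k, hkne, Set.mem_Icc.mpr ⟨hklow, hspec.2⟩, hhigh⟩

lemma cross_unique {w B x k k' : ℕ} {L : List ℕ}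
    (h1 : pos x L k ≤ w + B) (h1' : ∀ j < k, w + B + 1 ≤ pos x L j)
    (h2 : pos x L k' ≤ w + B) (h2' : ∀ j < k', w + B + 1 ≤ pos x L j) : k = k' := by
  rcases lt_trichotomy k k' with h | h | h
  · have := h2' k h; omega
  · exact h
  · have := h1' k' h; omega

/-! ### strong Markov decomposition -/

lemma nu_decomp (hB : AssumptionB X B) {a w x u : ℕ} (hw : a + B + 1 ≤ w)
    (hx : w + B + 1 ≤ x) :
    nu X B a x u = ∑' v : ℕ, nu X B w x v * nu X B a v u := by
  classical
  -- the sigma type of split paths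
  have hstep1 :
      (∑' q : Σ v : ℕ, {l : List ℕ // fe B w v x l} × {l : List ℕ // fe B a u v l},
        wt X x (q.2.1 : List ℕ) * wt X q.1 (q.2.2 : List ℕ))
        = ∑' v : ℕ, nu X B w x v * nu X B a v u := by
    rw [ENNReal.tsum_sigma']
    refine tsum_congr fun v => ?_
    rw [ENNReal.tsum_prod']
    rw [nu_eq X hB w x v, nu_eq X hB a v u]
    rw [← ENNReal.tsum_mul_right]
    refine tsum_congr fun l₁ => ?_
    rw [← ENNReal.tsum_mul_left]
  rw [← hstep1, nu_eq X hB a x u]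
  -- choose the crossing index
  have hex : ∀ L : {l : List ℕ // fe B a u x l},
      ∃ k, k < (L : List ℕ).length ∧ pos x L k ∈ Set.Icc w (w + B) ∧
        ∀ j < k, w + B + 1 ≤ pos x (L : List ℕ) j :=
    fun L => cross_exists hw hx L.2
  choose kk hk1 hk2 hk3 using hex
  -- the splitting map
  have pf1 : ∀ L : {l : List ℕ // fe B a u x l},
      fe B w (pos x (L : List ℕ) (kk L)) x ((L : List ℕ).take (kk L)) := by
    intro L
    have hklen : kk L ≤ (L : List ℕ).length := le_of_lt (hk1 L)
    refine ⟨⟨?_, ?_, hk2 L⟩, ok_take hklen L.2.2⟩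
    · intro j hj
      rw [length_take_of_le hklen] at hj
      rw [pos_take x hklen (le_of_lt hj)]
      have := hk3 L j hj
      rw [Set.mem_Icc]
      omega
    · rw [length_take_of_le hklen, pos_take x hklen le_rfl]
  have pf2 : ∀ L : {l : List ℕ // fe B a u x l},
      fe B a u (pos x (L : List ℕ) (kk L)) ((L : List ℕ).drop (kk L)) := by
    intro L
    have hklen : kk L ≤ (L : List ℕ).length := le_of_lt (hk1 L)
    refine ⟨⟨?_, ?_, L.2.1.2.2⟩, ok_drop hklen L.2.2⟩
    · intro j hj
      rw [List.length_drop] at hj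
      rw [pos_drop x hklen]
      exact L.2.1.1 (kk L + j) (by omega)
    · rw [List.length_drop, pos_drop x hklen,
        show kk L + ((L : List ℕ).length - kk L) = (L : List ℕ).length from by omega]
      exact L.2.1.2.1
  set T := Σ v : ℕ, {l : List ℕ // fe B w v x l} × {l : List ℕ // fe B a u v l} with hT
  set sfun : {l : List ℕ // fe B a u x l} → T := fun L =>
    ⟨pos x (L : List ℕ) (kk L),
      ⟨⟨(L : List ℕ).take (kk L), pf1 L⟩, ⟨(L : List ℕ).drop (kk L), pf2 L⟩⟩⟩ with hsfun
  have hval : ∀ L : {l : List ℕ // fe B a u x l},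
      wt X x (L : List ℕ) = wt X x ((L : List ℕ).take (kk L))
        * wt X (pos x (L : List ℕ) (kk L)) ((L : List ℕ).drop (kk L)) := by
    intro L
    have hklen : kk L ≤ (L : List ℕ).length := le_of_lt (hk1 L)
    have h := wt_append X x ((L : List ℕ).take (kk L)) ((L : List ℕ).drop (kk L))
    rw [List.take_append_drop] at h
    rw [h, length_take_of_le hklen, pos_take x hklen le_rfl]
  have hsinj : Function.Injective sfun := by
    intro L L' h
    have h2 := congrArg (fun q : T => (q.2.1 : List ℕ) ++ (q.2.2 : List ℕ)) h
    simp only [hsfun, sfun, List.take_append_drop] at h2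
    exact Subtype.ext h2
  have hcinj_val : ∀ q : T, wt X x (q.2.1 : List ℕ) * wt X q.1 (q.2.2 : List ℕ)
      = wt X x ((q.2.1 : List ℕ) ++ (q.2.2 : List ℕ)) := by
    rintro ⟨v, ⟨l₁, h₁⟩, ⟨l₂, h₂⟩⟩
    rw [wt_append, h₁.1.2.1]
  have pfc : ∀ q : T, fe B a u x ((q.2.1 : List ℕ) ++ (q.2.2 : List ℕ)) := by
    rintro ⟨v, ⟨l₁, h₁⟩, ⟨l₂, h₂⟩⟩
    show fe B a u x (l₁ ++ l₂)
    have hv : v ∈ Set.Icc w (w + B) := h₁.1.2.2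
    rw [Set.mem_Icc] at hv
    have hend1 : pos x l₁ l₁.length = v := h₁.1.2.1
    refine ⟨⟨?_, ?_, h₂.1.2.2⟩, ok_append h₁.2 (by rw [hend1]; exact h₂.2)⟩
    · intro k hkl
      rw [List.length_append] at hkl
      rcases lt_or_ge k l₁.length with h | h
      · rw [pos_append_left x l₁ l₂ (le_of_lt h)]
        have := stay_above hx h₁ k h
        rw [Set.mem_Icc]
        omega
      · obtain ⟨j, rfl⟩ : ∃ j, k = l₁.length + j := ⟨k - l₁.length, by omega⟩
        rw [pos_append_right, hend1]
        exact h₂.1.1 j (by omega)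
    · rw [List.length_append, pos_append_right, hend1]
      exact h₂.1.2.1
  set cfun : T → {l : List ℕ // fe B a u x l} := fun q =>
    ⟨(q.2.1 : List ℕ) ++ (q.2.2 : List ℕ), pfc q⟩ with hcfun
  have hccross : ∀ (v : ℕ) (l₁ l₂ : List ℕ), fe B w v x l₁ → fe B a u v l₂ →
      (pos x (l₁ ++ l₂) l₁.length ≤ w + B ∧
        ∀ j < l₁.length, w + B + 1 ≤ pos x (l₁ ++ l₂) j) := by
    intro v l₁ l₂ h₁ h₂
    have hv : v ∈ Set.Icc w (w + B) := h₁.1.2.2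
    rw [Set.mem_Icc] at hv
    constructor
    · rw [pos_append_left x l₁ l₂ le_rfl, h₁.1.2.1]
      omega
    · intro j hj
      rw [pos_append_left x l₁ l₂ (le_of_lt hj)]
      exact stay_above hx h₁ j hj
  have hcinj : Function.Injective cfun := by
    rintro ⟨v, ⟨l₁, h₁⟩, ⟨l₂, h₂⟩⟩ ⟨v', ⟨l₁', h₁'⟩, ⟨l₂', h₂'⟩⟩ h
    have hLL : l₁ ++ l₂ = l₁' ++ l₂' := congrArg Subtype.val h
    have hc1 := hccross v l₁ l₂ h₁ h₂
    have hc2 := hccross v' l₁' l₂' h₁' h₂'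
    rw [hLL] at hc1
    have hn : l₁.length = l₁'.length := cross_unique hc1.1 hc1.2 hc2.1 hc2.2
    obtain ⟨e1, e2⟩ := List.append_inj hLL hn
    subst e1; subst e2
    have hv : v = v' := by rw [← h₁.1.2.1, ← h₁'.1.2.1]
    subst hv
    rfl
  apply le_antisymm
  · refine Summable.tsum_le_tsum_of_inj sfun hsinj (fun c _ => zero_le) (fun L => ?_)
      ENNReal.summable ENNReal.summable
    exact le_of_eq (hval L)
  · refine Summable.tsum_le_tsum_of_inj cfun hcinj (fun c _ => zero_le) (fun q => ?_)
      ENNReal.summable ENNReal.summable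
    exact le_of_eq (hcinj_val q)

/-! ### minorization -/

lemma nu_minor (hB : AssumptionB X B) {ε : ENNReal} {m : ℕ} (hIw : AssumptionIWith X B ε m)
    {tgt y v v' u : ℕ} (hy : tgt + ((m + 1) * B + 1) ≤ y)
    (hv : v ∈ Set.Icc y (y + B)) (hv' : v' ∈ Set.Icc y (y + B)) :
    ε * nu X B tgt v' u ≤ nu X B tgt v u := by
  rw [Set.mem_Icc] at hv hv'
  obtain ⟨n, hn1, hnm, hεn⟩ := hIw.2.2 v v' (by omega)
  have pfc : ∀ q : {l : List ℕ // co B n v' v l} × {l : List ℕ // fe B tgt u v' l},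
      fe B tgt u v ((q.1 : List ℕ) ++ (q.2 : List ℕ)) := by
    rintro ⟨⟨l₁, h₁⟩, ⟨l₂, h₂⟩⟩
    show fe B tgt u v (l₁ ++ l₂)
    have hlen : l₁.length = n := h₁.1.1
    have hend1 : pos v l₁ l₁.length = v' := by rw [hlen]; exact h₁.1.2
    have hposlow : ∀ k ≤ l₁.length, tgt + B + 1 ≤ pos v l₁ k := by
      intro k hkl
      have hb := pos_ge_start h₁.2 k hkl
      have hkm : k ≤ m := by omega
      have hmul : (k : ℤ) * B ≤ (m : ℤ) * B := by
        apply mul_le_mul_of_nonneg_right _ (by positivity)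
        exact_mod_cast hkm
      have hyz : (tgt : ℤ) + ((m + 1) * B + 1) ≤ (y : ℤ) := by exact_mod_cast hy
      have hvz : (y : ℤ) ≤ (v : ℤ) := by exact_mod_cast hv.1
      have hgoal : (tgt : ℤ) + B + 1 ≤ (pos v l₁ k : ℤ) := by
        have hexp : ((m : ℤ) + 1) * B = (m : ℤ) * B + B := by ring
        push_cast at hyz
        nlinarith [hb, hmul, hyz, hvz]
      exact_mod_cast hgoal
    refine ⟨⟨?_, ?_, h₂.1.2.2⟩, ok_append h₁.2 (by rw [hend1]; exact h₂.2)⟩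
    · intro k hkl
      rw [List.length_append] at hkl
      rcases le_or_gt k l₁.length with h | h
      · rw [pos_append_left v l₁ l₂ h]
        have := hposlow k h
        rw [Set.mem_Icc]
        omega
      · obtain ⟨j, rfl⟩ : ∃ j, k = l₁.length + j := ⟨k - l₁.length, by omega⟩
        rw [pos_append_right, hend1]
        exact h₂.1.1 j (by omega)
    · rw [List.length_append, pos_append_right, hend1]
      exact h₂.1.2.1
  set cfun : {l : List ℕ // co B n v' v l} × {l : List ℕ // fe B tgt u v' l}
      → {l : List ℕ // fe B tgt u v l} := fun q => ⟨(q.1 : List ℕ) ++ (q.2 : List ℕ), pfc q⟩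
    with hcfun
  have hcinj : Function.Injective cfun := by
    rintro ⟨⟨l₁, h₁⟩, ⟨l₂, h₂⟩⟩ ⟨⟨l₁', h₁'⟩, ⟨l₂', h₂'⟩⟩ h
    have hLL : l₁ ++ l₂ = l₁' ++ l₂' := congrArg Subtype.val h
    obtain ⟨e1, e2⟩ := List.append_inj hLL (by rw [h₁.1.1, h₁'.1.1])
    subst e1; subst e2
    rfl
  calc ε * nu X B tgt v' u ≤ X.law v {ω | ω n = v'} * nu X B tgt v' u :=
        mul_le_mul_left hεn _
    _ = (∑' l₁ : {l : List ℕ // co B n v' v l}, wt X v (l₁ : List ℕ))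
        * (∑' l₂ : {l : List ℕ // fe B tgt u v' l}, wt X v' (l₂ : List ℕ)) := by
        rw [law_coord_eq X hB, nu_eq X hB]
    _ = ∑' q : {l : List ℕ // co B n v' v l} × {l : List ℕ // fe B tgt u v' l},
          wt X v (q.1 : List ℕ) * wt X v' (q.2 : List ℕ) := by
        rw [ENNReal.tsum_prod', ← ENNReal.tsum_mul_right]
        refine tsum_congr fun l₁ => ?_
        rw [← ENNReal.tsum_mul_left]
    _ ≤ ∑' L : {l : List ℕ // fe B tgt u v l}, wt X v (L : List ℕ) := by
        refine Summable.tsum_le_tsum_of_inj cfun hcinj (fun c _ => zero_le) (fun q => ?_)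
          ENNReal.summable ENNReal.summable
        obtain ⟨⟨l₁, h₁⟩, ⟨l₂, h₂⟩⟩ := q
        have hend1 : pos v l₁ l₁.length = v' := by rw [h₁.1.1]; exact h₁.1.2
        show wt X v l₁ * wt X v' l₂ ≤ wt X v (l₁ ++ l₂)
        rw [wt_append, hend1]
    _ = nu X B tgt v u := (nu_eq X hB tgt v u).symm

/-! ### real-valued quantities -/

def Nr (B a x u : ℕ) : ℝ := (nu X B a x u).toReal

def Hr (B a x : ℕ) : ℝ := (hh X B a x).toReal

lemma Nr_nonneg (B a x u : ℕ) : 0 ≤ Nr X B a x u := ENNReal.toReal_nonneg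

lemma Hr_nonneg (B a x : ℕ) : 0 ≤ Hr X B a x := ENNReal.toReal_nonneg

lemma Hr_pos (hirr : X.Irred) (B a x : ℕ) : 0 < Hr X B a x :=
  ENNReal.toReal_pos (hh_pos X hirr B a x).ne' (hh_ne_top X a x)

lemma Nr_le_Hr (B a x u : ℕ) : Nr X B a x u ≤ Hr X B a x :=
  ENNReal.toReal_mono (hh_ne_top X a x) (nu_le_hh X a x u)

lemma Nr_zero {B a u : ℕ} (x : ℕ) (h : u ∉ Set.Icc a (a + B)) : Nr X B a x u = 0 := by
  rw [Nr, nu_zero_of_not_mem X x h, ENNReal.toReal_zero]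

lemma Hr_sum (hB : AssumptionB X B) (a x : ℕ) :
    Hr X B a x = ∑ u ∈ Finset.Icc a (a + B), Nr X B a x u := by
  rw [Hr, hh_eq_tsum_nu, tsum_eq_sum (s := Finset.Icc a (a + B))
    (fun u hu => nu_zero_of_not_mem X x (by simpa [Finset.mem_Icc, Set.mem_Icc] using hu))]
  exact ENNReal.toReal_sum fun u _ => nu_ne_top X a x u

lemma Nr_decomp (hB : AssumptionB X B) {a w x : ℕ} (u : ℕ) (hw : a + B + 1 ≤ w)
    (hx : w + B + 1 ≤ x) :
    Nr X B a x u = ∑ v ∈ Finset.Icc w (w + B), Nr X B w x v * Nr X B a v u := by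
  rw [Nr, nu_decomp X hB hw hx, tsum_eq_sum (s := Finset.Icc w (w + B))
    (fun v hv => by
      rw [nu_zero_of_not_mem X x (by simpa [Finset.mem_Icc, Set.mem_Icc] using hv), zero_mul])]
  rw [ENNReal.toReal_sum fun v _ => ENNReal.mul_ne_top (nu_ne_top X w x v) (nu_ne_top X a v u)]
  exact Finset.sum_congr rfl fun v _ => ENNReal.toReal_mul

lemma Hr_decomp (hB : AssumptionB X B) {a w x : ℕ} (hw : a + B + 1 ≤ w)
    (hx : w + B + 1 ≤ x) :
    Hr X B a x = ∑ v ∈ Finset.Icc w (w + B), Nr X B w x v * Hr X B a v := by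
  rw [Hr_sum X hB a x]
  rw [show ∑ u ∈ Finset.Icc a (a + B), Nr X B a x u
      = ∑ u ∈ Finset.Icc a (a + B), ∑ v ∈ Finset.Icc w (w + B), Nr X B w x v * Nr X B a v u
    from Finset.sum_congr rfl fun u _ => Nr_decomp X hB u hw hx]
  rw [Finset.sum_comm]
  refine Finset.sum_congr rfl fun v _ => ?_
  rw [← Finset.mul_sum, ← Hr_sum X hB a v]

lemma Nr_minor (hB : AssumptionB X B) {ε : ENNReal} {m : ℕ} (hIw : AssumptionIWith X B ε m)
    {e : ℝ} (he : ENNReal.ofReal e ≤ ε) (he0 : 0 ≤ e)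
    {tgt y v v' u : ℕ} (hy : tgt + ((m + 1) * B + 1) ≤ y)
    (hv : v ∈ Set.Icc y (y + B)) (hv' : v' ∈ Set.Icc y (y + B)) :
    e * Nr X B tgt v' u ≤ Nr X B tgt v u := by
  have h := nu_minor X hB hIw (u := u) hy hv hv'
  have h2 : ENNReal.ofReal e * nu X B tgt v' u ≤ nu X B tgt v u :=
    le_trans (mul_le_mul_left he _) h
  have h3 := ENNReal.toReal_mono (nu_ne_top X tgt v u) h2
  rwa [ENNReal.toReal_mul, ENNReal.toReal_ofReal he0] at h3

lemma Hr_minor (hB : AssumptionB X B) {ε : ENNReal} {m : ℕ} (hIw : AssumptionIWith X B ε m)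
    {e : ℝ} (he : ENNReal.ofReal e ≤ ε) (he0 : 0 ≤ e)
    {tgt y v v' : ℕ} (hy : tgt + ((m + 1) * B + 1) ≤ y)
    (hv : v ∈ Set.Icc y (y + B)) (hv' : v' ∈ Set.Icc y (y + B)) :
    e * Hr X B tgt v' ≤ Hr X B tgt v := by
  rw [Hr_sum X hB, Hr_sum X hB, Finset.mul_sum]
  exact Finset.sum_le_sum fun u _ => Nr_minor X hB hIw he he0 hy hv hv'

/-! ### the convex-combination contraction bound -/

lemma cc_bound {I W : Finset ℕ} {g : ℕ → ℕ → ℝ} {q q' : ℕ → ℝ} {t D : ℝ}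
    (hq0 : ∀ v ∈ W, 0 ≤ q v) (hq'0 : ∀ v ∈ W, 0 ≤ q' v)
    (hqt : ∑ v ∈ W, q v = t) (hq't : ∑ v ∈ W, q' v = t)
    (hD : ∀ v ∈ W, ∀ v' ∈ W, ∑ u ∈ I, |g v u - g v' u| ≤ D) (hD0 : 0 ≤ D) :
    ∑ u ∈ I, |∑ v ∈ W, q v * g v u - ∑ v ∈ W, q' v * g v u| ≤ t * D := by
  have ht0 : 0 ≤ t := hqt ▸ Finset.sum_nonneg hq0
  rcases eq_or_lt_of_le ht0 with h0 | hpos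
  · have hq : ∀ v ∈ W, q v = 0 :=
      (Finset.sum_eq_zero_iff_of_nonneg hq0).mp (hqt.trans h0.symm)
    have hq' : ∀ v ∈ W, q' v = 0 :=
      (Finset.sum_eq_zero_iff_of_nonneg hq'0).mp (hq't.trans h0.symm)
    rw [← h0, zero_mul]
    apply le_of_eq
    refine Finset.sum_eq_zero fun u _ => ?_
    rw [Finset.sum_eq_zero fun v hv => by rw [hq v hv, zero_mul],
      Finset.sum_eq_zero fun v hv => by rw [hq' v hv, zero_mul], sub_zero, abs_zero]
  · have key : ∀ u, ∑ v ∈ W, q v * g v u - ∑ v ∈ W, q' v * g v u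
        = t⁻¹ * ∑ v ∈ W, ∑ v' ∈ W, q v * q' v' * (g v u - g v' u) := by
      intro u
      have expand : ∑ v ∈ W, ∑ v' ∈ W, q v * q' v' * (g v u - g v' u)
          = (∑ v ∈ W, q v * g v u) * t - t * (∑ v' ∈ W, q' v' * g v' u) := by
        calc ∑ v ∈ W, ∑ v' ∈ W, q v * q' v' * (g v u - g v' u)
            = ∑ v ∈ W, ∑ v' ∈ W, (q v * g v u * q' v' - q v * (q' v' * g v' u)) :=
              Finset.sum_congr rfl fun v _ => Finset.sum_congr rfl fun v' _ => by ring
          _ = ∑ v ∈ W, (q v * g v u * t - q v * (∑ v' ∈ W, q' v' * g v' u)) := by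
              refine Finset.sum_congr rfl fun v _ => ?_
              rw [Finset.sum_sub_distrib, ← Finset.mul_sum, ← Finset.mul_sum, hq't]
          _ = (∑ v ∈ W, q v * g v u) * t - t * (∑ v' ∈ W, q' v' * g v' u) := by
              rw [Finset.sum_sub_distrib, ← Finset.sum_mul, ← Finset.sum_mul, hqt]
      rw [expand, mul_sub, show t⁻¹ * ((∑ v ∈ W, q v * g v u) * t) = ∑ v ∈ W, q v * g v u from by
        field_simp, show t⁻¹ * (t * (∑ v' ∈ W, q' v' * g v' u)) = ∑ v' ∈ W, q' v' * g v' u from by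
        field_simp]
    calc ∑ u ∈ I, |∑ v ∈ W, q v * g v u - ∑ v ∈ W, q' v * g v u|
        = ∑ u ∈ I, |t⁻¹ * ∑ v ∈ W, ∑ v' ∈ W, q v * q' v' * (g v u - g v' u)| := by
          exact Finset.sum_congr rfl fun u _ => by rw [key u]
      _ ≤ ∑ u ∈ I, t⁻¹ * ∑ v ∈ W, ∑ v' ∈ W, q v * q' v' * |g v u - g v' u| := by
          refine Finset.sum_le_sum fun u _ => ?_
          rw [abs_mul, abs_of_nonneg (inv_nonneg.mpr ht0)]
          refine mul_le_mul_of_nonneg_left ?_ (inv_nonneg.mpr ht0)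
          calc |∑ v ∈ W, ∑ v' ∈ W, q v * q' v' * (g v u - g v' u)|
              ≤ ∑ v ∈ W, |∑ v' ∈ W, q v * q' v' * (g v u - g v' u)| :=
                Finset.abs_sum_le_sum_abs _ _
            _ ≤ ∑ v ∈ W, ∑ v' ∈ W, |q v * q' v' * (g v u - g v' u)| :=
                Finset.sum_le_sum fun v _ => Finset.abs_sum_le_sum_abs _ _
            _ = ∑ v ∈ W, ∑ v' ∈ W, q v * q' v' * |g v u - g v' u| := by
                refine Finset.sum_congr rfl fun v hv => Finset.sum_congr rfl fun v' hv' => ?_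
                rw [abs_mul, abs_of_nonneg (mul_nonneg (hq0 v hv) (hq'0 v' hv'))]
      _ = t⁻¹ * ∑ v ∈ W, ∑ v' ∈ W, q v * q' v' * (∑ u ∈ I, |g v u - g v' u|) := by
          rw [← Finset.mul_sum]
          congr 1
          rw [Finset.sum_comm]
          refine Finset.sum_congr rfl fun v _ => ?_
          rw [Finset.sum_comm]
          refine Finset.sum_congr rfl fun v' _ => ?_
          rw [Finset.mul_sum]
      _ ≤ t⁻¹ * ∑ v ∈ W, ∑ v' ∈ W, q v * q' v' * D := by
          refine mul_le_mul_of_nonneg_left ?_ (inv_nonneg.mpr ht0)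
          refine Finset.sum_le_sum fun v hv => Finset.sum_le_sum fun v' hv' => ?_
          exact mul_le_mul_of_nonneg_left (hD v hv v' hv')
            (mul_nonneg (hq0 v hv) (hq'0 v' hv'))
      _ = t⁻¹ * (t * t * D) := by
          congr 1
          calc ∑ v ∈ W, ∑ v' ∈ W, q v * q' v' * D
              = ∑ v ∈ W, q v * (t * D) := by
                refine Finset.sum_congr rfl fun v _ => ?_
                calc ∑ v' ∈ W, q v * q' v' * D = ∑ v' ∈ W, q v * (q' v' * D) :=
                      Finset.sum_congr rfl fun v' _ => by ring
                  _ = q v * ∑ v' ∈ W, q' v' * D := by rw [Finset.mul_sum]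
                  _ = q v * (∑ v' ∈ W, q' v') * D := by rw [← Finset.sum_mul]; ring
                  _ = q v * (t * D) := by rw [hq't]; ring
            _ = (∑ v ∈ W, q v) * (t * D) := by rw [← Finset.sum_mul]
            _ = t * t * D := by rw [hqt]; ring
      _ = t * D := by field_simp

/-! ### conditioned entrance vector and contraction -/

def pr (B a x u : ℕ) : ℝ := Nr X B a x u / Hr X B a x

lemma pr_nonneg (hirr : X.Irred) (B a x u : ℕ) : 0 ≤ pr X B a x u :=
  div_nonneg (Nr_nonneg X B a x u) (Hr_nonneg X B a x)

lemma pr_le_one (hirr : X.Irred) (B a x u : ℕ) : pr X B a x u ≤ 1 :=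
  (div_le_one (Hr_pos X hirr B a x)).mpr (Nr_le_Hr X B a x u)

lemma pr_sum (hB : AssumptionB X B) (hirr : X.Irred) (a x : ℕ) :
    ∑ u ∈ Finset.Icc a (a + B), pr X B a x u = 1 := by
  simp only [pr]
  rw [← Finset.sum_div, ← Hr_sum X hB a x, div_self (Hr_pos X hirr B a x).ne']

lemma pr_zero (hirr : X.Irred) {B a u : ℕ} (x : ℕ) (h : u ∉ Set.Icc a (a + B)) :
    pr X B a x u = 0 := by
  rw [pr, Nr_zero X x h, zero_div]

lemma pr_decomp (hB : AssumptionB X B) (hirr : X.Irred) {a w x : ℕ} (u : ℕ)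
    (hw : a + B + 1 ≤ w) (hx : w + B + 1 ≤ x) :
    pr X B a x u = ∑ v ∈ Finset.Icc w (w + B),
      (Nr X B w x v * Hr X B a v / Hr X B a x) * pr X B a v u := by
  rw [pr, Nr_decomp X hB u hw hx, Finset.sum_div]
  refine Finset.sum_congr rfl fun v _ => ?_
  rw [pr]
  have h1 := (Hr_pos X hirr B a v).ne'
  have h2 := (Hr_pos X hirr B a x).ne'
  field_simp

lemma q_sum (hB : AssumptionB X B) (hirr : X.Irred) {a w x : ℕ}
    (hw : a + B + 1 ≤ w) (hx : w + B + 1 ≤ x) :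
    ∑ v ∈ Finset.Icc w (w + B), Nr X B w x v * Hr X B a v / Hr X B a x = 1 := by
  rw [← Finset.sum_div, ← Hr_decomp X hB hw hx, div_self (Hr_pos X hirr B a x).ne']

lemma q_nonneg (a w x v : ℕ) : 0 ≤ Nr X B w x v * Hr X B a v / Hr X B a x :=
  div_nonneg (mul_nonneg (Nr_nonneg X B w x v) (Hr_nonneg X B a v)) (Hr_nonneg X B a x)

lemma q_comp (hB : AssumptionB X B) (hirr : X.Irred) {ε : ENNReal} {m : ℕ}
    (hIw : AssumptionIWith X B ε m) {e : ℝ} (he : ENNReal.ofReal e ≤ ε) (he0 : 0 ≤ e)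
    {a w y v vb : ℕ} (v' : ℕ) (hwy : w + ((m + 1) * B + 1) ≤ y)
    (hay : a + ((m + 1) * B + 1) ≤ y)
    (hv : v ∈ Set.Icc y (y + B)) (hvb : vb ∈ Set.Icc y (y + B)) :
    e ^ 2 * (Nr X B w vb v' * Hr X B a v' / Hr X B a vb)
      ≤ Nr X B w v v' * Hr X B a v' / Hr X B a v := by
  have h1 : e * Nr X B w vb v' ≤ Nr X B w v v' :=
    Nr_minor X hB hIw he he0 (u := v') hwy hv hvb
  have h2 : e * Hr X B a v ≤ Hr X B a vb :=
    Hr_minor X hB hIw he he0 hay hvb hv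
  have hHv := Hr_pos X hirr B a v
  have hHvb := Hr_pos X hirr B a vb
  have hH' := Hr_nonneg X B a v'
  have hN := Nr_nonneg X B w vb v'
  rw [show e ^ 2 * (Nr X B w vb v' * Hr X B a v' / Hr X B a vb)
      = e ^ 2 * (Nr X B w vb v' * Hr X B a v') / Hr X B a vb from by ring]
  rw [div_le_div_iff₀ hHvb hHv]
  calc e ^ 2 * (Nr X B w vb v' * Hr X B a v') * Hr X B a v
      = (e * Nr X B w vb v') * (Hr X B a v' * (e * Hr X B a v)) := by ring
    _ ≤ Nr X B w v v' * (Hr X B a v' * Hr X B a vb) :=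
        mul_le_mul h1 (mul_le_mul_of_nonneg_left h2 hH')
          (by positivity) (Nr_nonneg X B w v v')
    _ = Nr X B w v v' * Hr X B a v' * Hr X B a vb := by ring

lemma step_contract (hB : AssumptionB X B) (hirr : X.Irred) {ε : ENNReal} {m : ℕ}
    (hIw : AssumptionIWith X B ε m) {e : ℝ} (he : ENNReal.ofReal e ≤ ε) (he0 : 0 < e)
    (he1 : e ≤ 1) {a w y v vb : ℕ} (hw : a + B + 1 ≤ w)
    (hwy : w + ((m + 1) * B + 1) ≤ y) (hay : a + ((m + 1) * B + 1) ≤ y)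
    (hv : v ∈ Set.Icc y (y + B)) (hvb : vb ∈ Set.Icc y (y + B)) {D : ℝ} (hD0 : 0 ≤ D)
    (hD : ∀ v' ∈ Finset.Icc w (w + B), ∀ v'' ∈ Finset.Icc w (w + B),
      ∑ u ∈ Finset.Icc a (a + B), |pr X B a v' u - pr X B a v'' u| ≤ D) :
    ∑ u ∈ Finset.Icc a (a + B), |pr X B a v u - pr X B a vb u| ≤ (1 - e ^ 2) * D := by
  classical
  have hBle : B ≤ (m + 1) * B := Nat.le_mul_of_pos_left B (Nat.succ_pos m)
  have hvI := hv
  have hvbI := hvb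
  rw [Set.mem_Icc] at hvI hvbI
  have hxv : w + B + 1 ≤ v := by omega
  have hxvb : w + B + 1 ≤ vb := by omega
  set S := Finset.Icc w (w + B) with hS
  set qf : ℕ → ℝ := fun v' => Nr X B w v v' * Hr X B a v' / Hr X B a v with hqf
  set qb : ℕ → ℝ := fun v' => Nr X B w vb v' * Hr X B a v' / Hr X B a vb with hqb
  set mn : ℕ → ℝ := fun v' => min (qf v') (qb v') with hmn
  have hq0f : ∀ v' ∈ S, 0 ≤ qf v' := fun v' _ => by
    simp only [hqf]; exact q_nonneg X a w v v'
  have hq0b : ∀ v' ∈ S, 0 ≤ qb v' := fun v' _ => by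
    simp only [hqb]; exact q_nonneg X a w vb v'
  have hsumf : ∑ v' ∈ S, qf v' = 1 := by
    simp only [hqf, hS]; exact q_sum X hB hirr hw hxv
  have hsumb : ∑ v' ∈ S, qb v' = 1 := by
    simp only [hqb, hS]; exact q_sum X hB hirr hw hxvb
  have hmge : ∀ v' ∈ S, e ^ 2 * qb v' ≤ mn v' := by
    intro v' hv'
    simp only [hmn]
    refine le_min ?_ ?_
    · simp only [hqf, hqb]
      exact q_comp X hB hirr hIw he he0.le v' hwy hay hv hvb
    · have h1 : e ^ 2 ≤ 1 := by nlinarith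
      exact mul_le_of_le_one_left (hq0b v' hv') h1
  set t := 1 - ∑ v' ∈ S, mn v' with ht
  have hrsum : ∑ v' ∈ S, (qf v' - mn v') = t := by
    rw [Finset.sum_sub_distrib, hsumf, ht]
  have hrbsum : ∑ v' ∈ S, (qb v' - mn v') = t := by
    rw [Finset.sum_sub_distrib, hsumb, ht]
  have hr0 : ∀ v' ∈ S, 0 ≤ qf v' - mn v' := fun v' _ => by
    simp only [hmn]; exact sub_nonneg.mpr (min_le_left _ _)
  have hrb0 : ∀ v' ∈ S, 0 ≤ qb v' - mn v' := fun v' _ => by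
    simp only [hmn]; exact sub_nonneg.mpr (min_le_right _ _)
  have htle : t ≤ 1 - e ^ 2 := by
    have h3 : e ^ 2 ≤ ∑ v' ∈ S, mn v' := by
      calc e ^ 2 = ∑ v' ∈ S, e ^ 2 * qb v' := by rw [← Finset.mul_sum, hsumb, mul_one]
        _ ≤ ∑ v' ∈ S, mn v' := Finset.sum_le_sum hmge
    rw [ht]; linarith
  have hkey := cc_bound (g := fun v' u => pr X B a v' u) (I := Finset.Icc a (a + B)) (W := S)
    hr0 hrb0 hrsum hrbsum hD hD0
  have hdiff : ∀ u, pr X B a v u - pr X B a vb u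
      = (∑ v' ∈ S, (qf v' - mn v') * pr X B a v' u)
        - ∑ v' ∈ S, (qb v' - mn v') * pr X B a v' u := by
    intro u
    have e1 : pr X B a v u = ∑ v' ∈ S, qf v' * pr X B a v' u := by
      simp only [hqf, hS]; exact pr_decomp X hB hirr u hw hxv
    have e2 : pr X B a vb u = ∑ v' ∈ S, qb v' * pr X B a v' u := by
      simp only [hqb, hS]; exact pr_decomp X hB hirr u hw hxvb
    have e3 : ∑ v' ∈ S, (qf v' - mn v') * pr X B a v' u
        = ∑ v' ∈ S, qf v' * pr X B a v' u - ∑ v' ∈ S, mn v' * pr X B a v' u := by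
      rw [← Finset.sum_sub_distrib]
      exact Finset.sum_congr rfl fun v' _ => by ring
    have e4 : ∑ v' ∈ S, (qb v' - mn v') * pr X B a v' u
        = ∑ v' ∈ S, qb v' * pr X B a v' u - ∑ v' ∈ S, mn v' * pr X B a v' u := by
      rw [← Finset.sum_sub_distrib]
      exact Finset.sum_congr rfl fun v' _ => by ring
    rw [e1, e2, e3, e4]
    ring
  calc ∑ u ∈ Finset.Icc a (a + B), |pr X B a v u - pr X B a vb u|
      = ∑ u ∈ Finset.Icc a (a + B), |(∑ v' ∈ S, (qf v' - mn v') * pr X B a v' u)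
          - ∑ v' ∈ S, (qb v' - mn v') * pr X B a v' u| :=
        Finset.sum_congr rfl fun u _ => by rw [hdiff u]
    _ ≤ t * D := hkey
    _ ≤ (1 - e ^ 2) * D := mul_le_mul_of_nonneg_right htle hD0

lemma combine_bound (hB : AssumptionB X B) (hirr : X.Irred) {a w x y : ℕ}
    (hw : a + B + 1 ≤ w) (hx : w + B + 1 ≤ x) (hy : w + B + 1 ≤ y) {D : ℝ} (hD0 : 0 ≤ D)
    (hD : ∀ v' ∈ Finset.Icc w (w + B), ∀ v'' ∈ Finset.Icc w (w + B),
      ∑ u ∈ Finset.Icc a (a + B), |pr X B a v' u - pr X B a v'' u| ≤ D) :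
    ∑ u ∈ Finset.Icc a (a + B), |pr X B a x u - pr X B a y u| ≤ D := by
  classical
  have hkey := cc_bound (g := fun v' u => pr X B a v' u) (I := Finset.Icc a (a + B))
    (W := Finset.Icc w (w + B))
    (q := fun v => Nr X B w x v * Hr X B a v / Hr X B a x)
    (q' := fun v => Nr X B w y v * Hr X B a v / Hr X B a y) (t := 1)
    (fun v _ => q_nonneg X a w x v) (fun v _ => q_nonneg X a w y v)
    (q_sum X hB hirr hw hx) (q_sum X hB hirr hw hy) hD hD0
  have hdiff : ∀ u, pr X B a x u - pr X B a y u
      = (∑ v ∈ Finset.Icc w (w + B), (Nr X B w x v * Hr X B a v / Hr X B a x) * pr X B a v u)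
        - ∑ v ∈ Finset.Icc w (w + B), (Nr X B w y v * Hr X B a v / Hr X B a y) * pr X B a v u := by
    intro u
    rw [← pr_decomp X hB hirr u hw hx, ← pr_decomp X hB hirr u hw hy]
  calc ∑ u ∈ Finset.Icc a (a + B), |pr X B a x u - pr X B a y u|
      = ∑ u ∈ Finset.Icc a (a + B),
          |(∑ v ∈ Finset.Icc w (w + B), (Nr X B w x v * Hr X B a v / Hr X B a x) * pr X B a v u)
            - ∑ v ∈ Finset.Icc w (w + B), (Nr X B w y v * Hr X B a v / Hr X B a y) * pr X B a v u| :=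
        Finset.sum_congr rfl fun u _ => by rw [hdiff u]
    _ ≤ 1 * D := hkey
    _ = D := one_mul D

end P57

/-- Proposition 5.7: exponential stabilization of the conditioned entrance distribution:
the limits `θ_a(u) = lim_{x→∞} Pr_x(X_{η_{I_a}} = u | η_{I_a} < ∞)` exist, and there are
constants `C < ∞` and `b > 0` such that for all `a` and all `ℓ > 0`,
`sup_{x ≥ a+B+ℓ} sup_{u ∈ I_a} |Pr_x(X_{η_{I_a}} = u | η_{I_a} < ∞) - θ_a(u)| ≤ C e^{-bℓ}`. -/
theorem entrance_distribution_stabilization (X : MarkovChain ℕ) (B : ℕ) (c s2 : ℝ)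
    (hirr : X.Irred) (hB : AssumptionB X B) (hI : AssumptionI X B)
    (hL : AssumptionL X c s2) :
    ∃ θ : ℕ → ℕ → ℝ,
      (∀ a u : ℕ, u ∈ Set.Icc a (a + B) →
        Tendsto (fun x : ℕ => entranceProb X B a x u) atTop (nhds (θ a u))) ∧
      ∃ C : ℝ, ∃ b : ℝ, 0 < b ∧
        ∀ a : ℕ, ∀ ℓ : ℝ, 0 < ℓ → ∀ x : ℕ, (a : ℝ) + (B : ℝ) + ℓ ≤ (x : ℝ) →
          ∀ u ∈ Set.Icc a (a + B),
            |entranceProb X B a x u - θ a u| ≤ C * Real.exp (-b * ℓ) := by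
  classical
  obtain ⟨ε, m, hIw⟩ := hI
  have hεle1 : ε ≤ 1 := by
    obtain ⟨n, _, _, hεn⟩ := hIw.2.2 0 0 (by simp)
    haveI := X.law_prob 0
    exact le_trans hεn prob_le_one
  have hεtop : ε ≠ ⊤ := ne_top_of_le_ne_top ENNReal.one_ne_top hεle1
  set e : ℝ := min ε.toReal 2⁻¹ with hedef
  have he0 : 0 < e := lt_min (ENNReal.toReal_pos hIw.1.ne' hεtop) (by norm_num)
  have heh : e ≤ 2⁻¹ := min_le_right _ _
  have he1 : e ≤ 1 := le_trans heh (by norm_num)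
  have heε : ENNReal.ofReal e ≤ ε :=
    le_trans (ENNReal.ofReal_le_ofReal (min_le_left _ _))
      (le_of_eq (ENNReal.ofReal_toReal hεtop))
  set Δ : ℕ := (m + 1) * B + 1 with hΔdef
  have hΔ1 : 1 ≤ Δ := Nat.succ_le_succ (Nat.zero_le _)
  have hΔB : B + 1 ≤ Δ := Nat.add_le_add_right (Nat.le_mul_of_pos_left B (Nat.succ_pos m)) 1
  set ρ : ℝ := 1 - e ^ 2 with hρdef
  have hesq : 0 < e ^ 2 := pow_pos he0 2
  have hesq4 : e ^ 2 ≤ 4⁻¹ := by nlinarith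
  have hρ0 : 0 < ρ := by rw [hρdef]; linarith
  have hρ1 : ρ < 1 := by rw [hρdef]; linarith
  have hπ_eq : ∀ a x u, entranceProb X B a x u = P57.pr X B a x u := by
    intro a x u
    simp only [entranceProb, P57.pr, P57.Nr, P57.Hr, P57.nu, P57.hh]
    exact ENNReal.toReal_div _ _
  have main : ∀ a j, ∀ v ∈ Set.Icc (a + Δ * (j + 1)) (a + Δ * (j + 1) + B),
      ∀ vb ∈ Set.Icc (a + Δ * (j + 1)) (a + Δ * (j + 1) + B),
      ∑ u ∈ Finset.Icc a (a + B), |P57.pr X B a v u - P57.pr X B a vb u| ≤ 2 * ρ ^ j := by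
    intro a j
    induction j with
    | zero =>
      intro v _ vb _
      rw [pow_zero, mul_one]
      calc ∑ u ∈ Finset.Icc a (a + B), |P57.pr X B a v u - P57.pr X B a vb u|
          ≤ ∑ u ∈ Finset.Icc a (a + B), (P57.pr X B a v u + P57.pr X B a vb u) := by
            refine Finset.sum_le_sum fun u _ => ?_
            have h := abs_add_le (P57.pr X B a v u) (-(P57.pr X B a vb u))
            rw [abs_neg, abs_of_nonneg (P57.pr_nonneg X hirr B a v u),
              abs_of_nonneg (P57.pr_nonneg X hirr B a vb u)] at h
            rw [sub_eq_add_neg]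
            exact h
        _ = 2 := by
            rw [Finset.sum_add_distrib, P57.pr_sum X hB hirr, P57.pr_sum X hB hirr]
            norm_num
    | succ j ih =>
      intro v hv vb hvb
      have hmul1 : Δ ≤ Δ * (j + 1) := Nat.le_mul_of_pos_right Δ (Nat.succ_pos j)
      have hmul2 : Δ * (j + 1 + 1) = Δ * (j + 1) + Δ := by ring
      have hw : a + B + 1 ≤ a + Δ * (j + 1) := by omega
      have hcalc : (1 - e ^ 2) * (2 * ρ ^ j) = 2 * ρ ^ (j + 1) := by
        rw [hρdef]; ring
      rw [← hcalc]
      refine P57.step_contract X hB hirr hIw heε he0 he1 hw ?_ ?_ hv hvb ?_ ?_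
      · rw [← hΔdef]; omega
      · rw [← hΔdef]; omega
      · positivity
      · intro v' hv' v'' hv''
        exact ih v' (Set.mem_Icc.mpr (Finset.mem_Icc.mp hv'))
          v'' (Set.mem_Icc.mpr (Finset.mem_Icc.mp hv''))
  have main2 : ∀ a j x y, a + Δ * (j + 1) + B + 1 ≤ x → a + Δ * (j + 1) + B + 1 ≤ y →
      ∑ u ∈ Finset.Icc a (a + B), |P57.pr X B a x u - P57.pr X B a y u| ≤ 2 * ρ ^ j := by
    intro a j x y hx hy
    have hmul1 : Δ ≤ Δ * (j + 1) := Nat.le_mul_of_pos_right Δ (Nat.succ_pos j)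
    have hw : a + B + 1 ≤ a + Δ * (j + 1) := by omega
    refine P57.combine_bound X hB hirr hw hx hy (by positivity) ?_
    intro v' hv' v'' hv''
    exact main a j v' (Set.mem_Icc.mpr (Finset.mem_Icc.mp hv'))
      v'' (Set.mem_Icc.mpr (Finset.mem_Icc.mp hv''))
  have hθex : ∀ a u, ∃ t, Tendsto (fun x : ℕ => entranceProb X B a x u) atTop (nhds t) := by
    intro a u
    by_cases hu : u ∈ Set.Icc a (a + B)
    · have hc : CauchySeq (fun x : ℕ => entranceProb X B a x u) := by
        rw [Metric.cauchySeq_iff]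
        intro δ hδ
        obtain ⟨j, hj⟩ := exists_pow_lt_of_lt_one (by linarith : (0:ℝ) < δ / 2) hρ1
        refine ⟨a + Δ * (j + 1) + B + 1, fun x hx y hy => ?_⟩
        rw [Real.dist_eq, hπ_eq, hπ_eq]
        have hle : |P57.pr X B a x u - P57.pr X B a y u|
            ≤ ∑ u' ∈ Finset.Icc a (a + B), |P57.pr X B a x u' - P57.pr X B a y u'| := by
          refine Finset.single_le_sum (f := fun u' => |P57.pr X B a x u' - P57.pr X B a y u'|)
            (fun u' _ => abs_nonneg _) ?_
          rw [Finset.mem_Icc]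
          rw [Set.mem_Icc] at hu
          exact hu
        have h2 := main2 a j x y hx hy
        calc |P57.pr X B a x u - P57.pr X B a y u|
            ≤ ∑ u' ∈ Finset.Icc a (a + B), |P57.pr X B a x u' - P57.pr X B a y u'| := hle
          _ ≤ 2 * ρ ^ j := h2
          _ < δ := by linarith
      exact cauchySeq_tendsto_of_complete hc
    · refine ⟨0, ?_⟩
      have hzero : (fun x : ℕ => entranceProb X B a x u) = fun _ => 0 := by
        funext x
        rw [hπ_eq]
        exact P57.pr_zero X hirr x hu
      rw [hzero]
      exact tendsto_const_nhds
  choose θ hθ using hθex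
  refine ⟨θ, fun a u _ => hθ a u, ?_⟩
  set b : ℝ := (-Real.log ρ) / Δ with hbdef
  have hlog : Real.log ρ < 0 := Real.log_neg hρ0 hρ1
  have hΔR : (0:ℝ) < (Δ : ℝ) := by exact_mod_cast Nat.lt_of_lt_of_le Nat.zero_lt_one hΔ1
  have hb0 : 0 < b := div_pos (by linarith) hΔR
  set C : ℝ := 2 / ρ ^ 3 + Real.exp (b * (2 * Δ + 2)) with hCdef
  have hθ0 : ∀ a u, 0 ≤ θ a u := fun a u =>
    ge_of_tendsto (hθ a u) (Filter.Eventually.of_forall fun x => by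
      rw [hπ_eq]; exact P57.pr_nonneg X hirr B a x u)
  have hθ1 : ∀ a u, θ a u ≤ 1 := fun a u =>
    le_of_tendsto (hθ a u) (Filter.Eventually.of_forall fun x => by
      rw [hπ_eq]; exact P57.pr_le_one X hirr B a x u)
  have hbound : ∀ a j x u, u ∈ Set.Icc a (a + B) → a + Δ * (j + 1) + B + 1 ≤ x →
      |entranceProb X B a x u - θ a u| ≤ 2 * ρ ^ j := by
    intro a j x u hu hx
    have hcont : Tendsto (fun y : ℕ => |entranceProb X B a x u - entranceProb X B a y u|)
        atTop (nhds |entranceProb X B a x u - θ a u|) :=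
      (Tendsto.sub tendsto_const_nhds (hθ a u)).abs
    refine le_of_tendsto hcont ?_
    filter_upwards [eventually_ge_atTop (a + Δ * (j + 1) + B + 1)] with y hy
    rw [hπ_eq, hπ_eq]
    have hle : |P57.pr X B a x u - P57.pr X B a y u|
        ≤ ∑ u' ∈ Finset.Icc a (a + B), |P57.pr X B a x u' - P57.pr X B a y u'| := by
      refine Finset.single_le_sum (f := fun u' => |P57.pr X B a x u' - P57.pr X B a y u'|)
        (fun u' _ => abs_nonneg _) ?_
      rw [Finset.mem_Icc]
      rw [Set.mem_Icc] at hu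
      exact hu
    exact le_trans hle (main2 a j x y hx hy)
  refine ⟨C, b, hb0, ?_⟩
  intro a ℓ hℓ x hx u hu
  have habx : ((a : ℝ) + (B : ℝ)) < (x : ℝ) := by linarith
  have habx' : a + B < x := by exact_mod_cast (by push_cast; linarith : ((a + B : ℕ) : ℝ) < (x : ℝ))
  set L : ℕ := ⌈ℓ⌉₊ with hLdef
  have hL1 : 0 < L := Nat.ceil_pos.mpr hℓ
  have hℓL : ℓ ≤ (L : ℝ) := Nat.le_ceil ℓ
  have hLx : a + B + L ≤ x := by
    have h1 : ℓ ≤ ((x - (a + B) : ℕ) : ℝ) := by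
      rw [Nat.cast_sub (le_of_lt habx')]
      push_cast
      linarith
    have h2 : L ≤ x - (a + B) := Nat.ceil_le.mpr h1
    omega
  have hp0 : 0 ≤ entranceProb X B a x u := by rw [hπ_eq]; exact P57.pr_nonneg X hirr B a x u
  have hp1 : entranceProb X B a x u ≤ 1 := by rw [hπ_eq]; exact P57.pr_le_one X hirr B a x u
  rcases le_or_gt L (2 * Δ + 1) with hsmall | hbig
  · have hd1 : |entranceProb X B a x u - θ a u| ≤ 1 := by
      rw [abs_le]
      constructor
      · linarith [hθ1 a u]
      · linarith [hθ0 a u]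
    have hℓ2 : ℓ ≤ 2 * (Δ:ℝ) + 2 := by
      have h3 : (L:ℝ) ≤ 2 * (Δ:ℝ) + 1 := by exact_mod_cast hsmall
      linarith
    have hexp : (1:ℝ) ≤ Real.exp (b * (2 * Δ + 2)) * Real.exp (-b * ℓ) := by
      rw [← Real.exp_add]
      calc (1:ℝ) = Real.exp 0 := Real.exp_zero.symm
        _ ≤ Real.exp (b * (2 * Δ + 2) + -b * ℓ) := by
            refine Real.exp_le_exp.mpr ?_
            have h4 : b * (2 * Δ + 2) + -b * ℓ = b * ((2 * (Δ:ℝ) + 2) - ℓ) := by ring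
            rw [h4]
            exact mul_nonneg hb0.le (by linarith)
    calc |entranceProb X B a x u - θ a u| ≤ 1 := hd1
      _ ≤ Real.exp (b * (2 * Δ + 2)) * Real.exp (-b * ℓ) := hexp
      _ ≤ C * Real.exp (-b * ℓ) := by
          refine mul_le_mul_of_nonneg_right ?_ (Real.exp_nonneg _)
          rw [hCdef]
          have h5 : 0 < 2 / ρ ^ 3 := by positivity
          linarith
  · set d : ℕ := L / Δ with hddef
    have hΔpos : 0 < Δ := hΔ1
    have hd2 : 2 ≤ d := by
      rw [hddef, Nat.le_div_iff_mul_le hΔpos]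
      omega
    set j : ℕ := d - 2 with hjdef
    have hjd : j + 2 = d := by omega
    have hdm : Δ * d ≤ L := by
      rw [hddef, mul_comm]
      exact Nat.div_mul_le_self L Δ
    have hjL : Δ * (j + 1) + 1 ≤ L := by
      have h5 : Δ * (j + 2) = Δ * (j + 1) + Δ := by ring
      have h6 : Δ * (j + 2) ≤ L := by rw [hjd]; exact hdm
      omega
    have hxj : a + Δ * (j + 1) + B + 1 ≤ x := by omega
    have hmain := hbound a j x u hu hxj
    have hjR : (ℓ / (Δ:ℝ) - 3 : ℝ) ≤ (j : ℝ) := by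
      have hmod := Nat.div_add_mod L Δ
      have hr : L % Δ < Δ := Nat.mod_lt L hΔpos
      have hbridge : Δ * d = Δ * (L / Δ) := by rw [hddef]
      have h7 : L < Δ * d + Δ := by omega
      have h8 : (L:ℝ) < (Δ:ℝ) * (d:ℝ) + (Δ:ℝ) := by exact_mod_cast h7
      have h9 : (j:ℝ) = (d:ℝ) - 2 := by
        rw [hjdef]
        push_cast [hd2]
        ring
      rw [h9]
      have h10 : ℓ / (Δ:ℝ) < (d:ℝ) + 1 := by
        rw [div_lt_iff₀ hΔR]
        calc ℓ ≤ (L:ℝ) := hℓL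
          _ < (Δ:ℝ) * (d:ℝ) + (Δ:ℝ) := h8
          _ = ((d:ℝ) + 1) * (Δ:ℝ) := by ring
      linarith
    have h11 : Real.exp ((j:ℝ) * Real.log ρ) = ρ ^ j := by
      rw [Real.exp_nat_mul, Real.exp_log hρ0]
    have hpow : ρ ^ j ≤ Real.exp (-b * ℓ) / ρ ^ 3 := by
      rw [← h11]
      have h12 : (j:ℝ) * Real.log ρ ≤ (ℓ / (Δ:ℝ) - 3) * Real.log ρ :=
        mul_le_mul_of_nonpos_right hjR (le_of_lt hlog)
      calc Real.exp ((j:ℝ) * Real.log ρ)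
          ≤ Real.exp ((ℓ / (Δ:ℝ) - 3) * Real.log ρ) := Real.exp_le_exp.mpr h12
        _ = Real.exp (-b * ℓ) / ρ ^ 3 := by
            rw [show (ℓ / (Δ:ℝ) - 3) * Real.log ρ = -b * ℓ + -(Real.log (ρ ^ 3)) from by
              rw [Real.log_pow, hbdef]
              push_cast
              field_simp
              ring]
            rw [Real.exp_add, Real.exp_neg, Real.exp_log (by positivity)]
            rw [div_eq_mul_inv]
    calc |entranceProb X B a x u - θ a u| ≤ 2 * ρ ^ j := hmain
      _ ≤ 2 * (Real.exp (-b * ℓ) / ρ ^ 3) := by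
          exact mul_le_mul_of_nonneg_left hpow (by norm_num)
      _ = (2 / ρ ^ 3) * Real.exp (-b * ℓ) := by ring
      _ ≤ C * Real.exp (-b * ℓ) := by
          refine mul_le_mul_of_nonneg_right ?_ (Real.exp_nonneg _)
          rw [hCdef]
          linarith [Real.exp_pos (b * (2 * (Δ:ℝ) + 2))]
end
end

section
/- Let X be an irreducible, time-homogeneous Markov chain on ℤ₊ satisfying (B), (I) and (L). There is a constant A₀ ∈ [0,∞) (one may take A₀ = A_{γ_c + 3}, the constant from the quantitative entrance-distribution stabilization with δ = γ_c + 3) such that for every A ≥ A₀, with a(x) := x − ⌊A log x⌋: sup_{|z| ≤ B} | h(x+z)/h(x) − Pr_{x+z}(η_{I_{a(x)}} < ∞) / Pr_x(η_{I_{a(x)}} < ∞) | = O(x^{−2}) as x → ∞. -/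
open MeasureTheory Filter Set Classical Asymptotics

noncomputable section

variable {S : Type} [MeasurableSpace S]

/-- `τ := inf {n ≥ 0 : X_n = z} (`∞` if no such `n`): first hitting time of the
distinguished state, including time 0. -/
def hitTime0 (z : S) (ω : ℕ → S) : ℕ∞ :=
  sInf {t : ℕ∞ | ∃ n : ℕ, (n : ℕ∞) = t ∧ ω n = z}

/-- `h(i) := Pr_i(τ < ∞)`, the probability of ever hitting the distinguished state `z`. -/
def hitProb (X : MarkovChain S) (z : S) (i : S) : ENNReal :=
  X.law i {ω | ∃ n : ℕ, ω n = z}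

/-- `Y` is a Doob `h`-transform of `X` (relative to the distinguished state `z`):
`p̃_{z,j} = p_{z,j}` and `p̃_{i,j} = (h(j)/h(i)) p_{i,j}` for `i ≠ z`, `j ≠ z`. -/
def IsDoobTransform (X Y : MarkovChain S) (z : S) : Prop :=
  (∀ j, Y.p z j = X.p z j) ∧
    ∀ i j, i ≠ z → j ≠ z → Y.p i j = hitProb X z j / hitProb X z i * X.p i j

/-- `a(x) := x - ⌊A log x⌋`. -/
def aFloor (A : ℝ) (x : ℕ) : ℕ := x - ⌊A * Real.log x⌋₊

namespace L510

/-- shift of a path -/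
def shiftP (n : ℕ) (ω : ℕ → ℕ) : ℕ → ℕ := fun k => ω (n + k)

/-- prefix cylinder -/
def Pre (y : ℕ → ℕ) (n : ℕ) : Set (ℕ → ℕ) := {ω | ∀ k ≤ n, ω k = y k}

/-- hitting event -/
def HitS (J : Set ℕ) : Set (ℕ → ℕ) := {ω | ∃ k, ω k ∈ J}

/-- first hit of J at time n with value u -/
def FHu (J : Set ℕ) (n u : ℕ) : Set (ℕ → ℕ) :=
  {ω | ω n = u ∧ ω n ∈ J ∧ ∀ j < n, ω j ∉ J}

lemma measurableSet_nat (s : Set ℕ) : MeasurableSet s := by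
  exact MeasurableSpace.measurableSet_top

lemma meas_eval (k : ℕ) (s : Set ℕ) : MeasurableSet {ω : ℕ → ℕ | ω k ∈ s} := by
  exact measurable_pi_apply k (measurableSet_nat s)

lemma meas_Pre (y : ℕ → ℕ) (n : ℕ) : MeasurableSet (Pre y n) := by
  have : Pre y n = ⋂ k ∈ Set.Iic n, {ω : ℕ → ℕ | ω k ∈ ({y k} : Set ℕ)} := by
    ext ω; simp [Pre, Set.mem_Iic]
  rw [this]
  exact MeasurableSet.biInter (Set.to_countable _) (fun k _ => meas_eval k _)

lemma meas_HitS (J : Set ℕ) : MeasurableSet (HitS J) := by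
  have : HitS J = ⋃ k, {ω : ℕ → ℕ | ω k ∈ J} := by ext ω; simp [HitS]
  rw [this]; exact MeasurableSet.iUnion (fun k => meas_eval k _)

lemma meas_FHu (J : Set ℕ) (n u : ℕ) : MeasurableSet (FHu J n u) := by
  have : FHu J n u = ({ω : ℕ → ℕ | ω n ∈ ({u} : Set ℕ)} ∩ {ω | ω n ∈ J}) ∩
      ⋂ j ∈ Set.Iio n, {ω : ℕ → ℕ | ω j ∈ Jᶜ} := by
    ext ω; simp [FHu]; tauto
  rw [this]
  exact ((meas_eval n _).inter (meas_eval n _)).inter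
    (MeasurableSet.biInter (Set.to_countable _) (fun k _ => meas_eval k _))

lemma meas_shiftP (n : ℕ) : Measurable (shiftP n) :=
  measurable_pi_lambda _ (fun k => measurable_pi_apply (n + k))

/-- etaTime dichotomy -/
lemma etaTime_eq (I : Set ℕ) (ω : ℕ → ℕ) :
    etaTime I ω = if h : ∃ m, ω m ∈ I then ((Nat.find h : ℕ∞)) else ⊤ := by
  unfold etaTime
  split_ifs with h
  · refine le_antisymm (sInf_le ⟨Nat.find h, rfl, Nat.find_spec h⟩) (le_sInf ?_)
    rintro t ⟨m, rfl, hm⟩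
    exact_mod_cast Nat.cast_le.mpr (Nat.find_min' h hm)
  · refine le_antisymm le_top (le_sInf ?_)
    rintro t ⟨m, rfl, hm⟩; exact absurd ⟨m, hm⟩ h

lemma etaTime_ne_top (I : Set ℕ) : {ω : ℕ → ℕ | etaTime I ω ≠ ⊤} = HitS I := by
  ext ω
  simp only [Set.mem_setOf_eq, etaTime_eq, HitS]
  split_ifs with h
  · simp [h]
  · simpa using h

lemma etaTime_coe_iff (I : Set ℕ) (ω : ℕ → ℕ) (n : ℕ) :
    etaTime I ω = (n : ℕ∞) ↔ (ω n ∈ I ∧ ∀ j < n, ω j ∉ I) := by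
  rw [etaTime_eq]
  constructor
  · intro h
    split_ifs at h with he
    · have : Nat.find he = n := by exact_mod_cast h
      rw [← this]
      exact ⟨Nat.find_spec he, fun j hj => Nat.find_min he (this ▸ hj)⟩
    · simp at h
  · rintro ⟨h1, h2⟩
    have he : ∃ m, ω m ∈ I := ⟨n, h1⟩
    rw [dif_pos he]
    have := Nat.find_eq_iff he (m := n)
    exact_mod_cast (Nat.find_eq_iff he).mpr ⟨h1, fun j hj => h2 j hj⟩

lemma etaNum_eq (I : Set ℕ) (u : ℕ) :
    {ω : ℕ → ℕ | ∃ n : ℕ, etaTime I ω = (n : ℕ∞) ∧ ω n = u} = ⋃ n, FHu I n u := by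
  ext ω
  simp only [Set.mem_setOf_eq, Set.mem_iUnion]
  constructor
  · rintro ⟨n, h1, h2⟩
    rw [etaTime_coe_iff] at h1
    exact ⟨n, h2, h1.1, h1.2⟩
  · rintro ⟨n, h2, h1, h3⟩
    exact ⟨n, (etaTime_coe_iff I ω n).mpr ⟨h1, h3⟩, h2⟩

end L510
namespace L510

variable (X : MarkovChain ℕ)

lemma law_pre (i n : ℕ) (y : ℕ → ℕ) (hy : y 0 = i) :
    X.law i (Pre y n) = ∏ k ∈ Finset.range n, X.p (y k) (y (k + 1)) :=
  X.law_cyl i n y hy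

lemma law_zero_eq (i : ℕ) : X.law i {ω | ω 0 = i} = 1 := by
  have := X.law_cyl i 0 (fun _ => i) rfl
  simpa using this

lemma law_zero_ne (i j : ℕ) (h : j ≠ i) : X.law i {ω | ω 0 = j} = 0 := by
  haveI := X.law_prob i
  have h1 : X.law i {ω : ℕ → ℕ | ω 0 = i}ᶜ = 0 := by
    have hm : MeasurableSet {ω : ℕ → ℕ | ω 0 = i} := by
      have : {ω : ℕ → ℕ | ω 0 = i} = {ω : ℕ → ℕ | ω 0 ∈ ({i} : Set ℕ)} := by ext ω; simp
      rw [this]; exact meas_eval 0 {i}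
    rw [measure_compl hm (measure_ne_top _ _), law_zero_eq, measure_univ]
    simp
  refine measure_mono_null ?_ h1
  intro ω hω hc
  exact h (hω ▸ hc)

lemma law_pre_ne (i n : ℕ) (y : ℕ → ℕ) (hy : y 0 ≠ i) : X.law i (Pre y n) = 0 := by
  refine measure_mono_null ?_ (law_zero_ne X i (y 0) hy)
  intro ω hω
  exact hω 0 (Nat.zero_le n)

lemma law_pre_shift_pre (i n m : ℕ) (y w : ℕ → ℕ) (hy : y 0 = i) :
    X.law i (Pre y n ∩ shiftP n ⁻¹' Pre w m) =
      (∏ k ∈ Finset.range n, X.p (y k) (y (k + 1))) * X.law (y n) (Pre w m) := by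
  by_cases hw : w 0 = y n
  · set z : ℕ → ℕ := fun k => if k ≤ n then y k else w (k - n) with hz
    have hz1 : ∀ k ≤ n, z k = y k := fun k hk => if_pos hk
    have hz2 : ∀ k, z (n + k) = w k := by
      intro k
      by_cases hk : n + k ≤ n
      · have : k = 0 := by omega
        subst this
        simp [hz, hw]
      · simp only [hz, if_neg hk]
        congr 1; omega
    have hset : Pre y n ∩ shiftP n ⁻¹' Pre w m = Pre z (n + m) := by
      ext ω
      constructor
      · rintro ⟨h1, h2⟩ k hk
        by_cases hkn : k ≤ n
        · rw [hz1 k hkn]; exact h1 k hkn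
        · have hk2 : k - n ≤ m := by omega
          have : ω k = w (k - n) := by
            have := h2 (k - n) hk2
            simpa [shiftP, Nat.add_sub_cancel' (by omega : n ≤ k)] using this
          rw [this, hz]; simp [hkn]
      · intro h
        constructor
        · intro k hk
          rw [← hz1 k hk]; exact h k (by omega)
        · intro k hk
          have := h (n + k) (by omega)
          simpa [shiftP, hz2 k] using this
    rw [hset, law_pre X i (n + m) z (by rw [hz1 0 (Nat.zero_le n)]; exact hy)]
    rw [Finset.prod_range_add]
    congr 1
    · apply Finset.prod_congr rfl
      intro k hk
      simp only [Finset.mem_range] at hk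
      rw [hz1 k (by omega), hz1 (k+1) (by omega)]
    · rw [law_pre X (y n) m w hw]
      apply Finset.prod_congr rfl
      intro k hk
      rw [hz2 k]
      have : n + k + 1 = n + (k + 1) := by omega
      rw [this, hz2 (k+1)]
  · have hset : Pre y n ∩ shiftP n ⁻¹' Pre w m = ∅ := by
      ext ω
      simp only [Set.mem_inter_iff, Set.mem_preimage, Set.mem_empty_iff_false, iff_false]
      rintro ⟨h1, h2⟩
      have e1 : ω n = y n := h1 n le_rfl
      have e2 : ω n = w 0 := by
        have := h2 0 (Nat.zero_le m)
        simpa [shiftP] using this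
      exact hw (e2 ▸ e1)
    rw [hset, law_pre_ne X (y n) m w hw, mul_zero, measure_empty]

end L510
namespace L510

/-- extend a finite word to a path -/
def extP (n : ℕ) (w : Fin (n + 1) → ℕ) : ℕ → ℕ :=
  fun j => if h : j < n + 1 then w ⟨j, h⟩ else 0

lemma extP_le (n : ℕ) (w : Fin (n + 1) → ℕ) (k : ℕ) (hk : k ≤ n) :
    extP n w k = w ⟨k, by omega⟩ := dif_pos (by omega)

lemma extP_restrict (n : ℕ) (ω : ℕ → ℕ) (k : ℕ) (hk : k ≤ n) :
    extP n (fun j : Fin (n + 1) => ω j.val) k = ω k := by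
  rw [extP_le n _ k hk]

lemma mem_pre_extP_restrict (n : ℕ) (ω : ℕ → ℕ) :
    ω ∈ Pre (extP n (fun j : Fin (n + 1) => ω j.val)) n :=
  fun k hk => (extP_restrict n ω k hk).symm

lemma pre_disjoint (n : ℕ) (w w' : Fin (n + 1) → ℕ) (h : w ≠ w') :
    Disjoint (Pre (extP n w) n) (Pre (extP n w') n) := by
  obtain ⟨j, hj⟩ := Function.ne_iff.mp h
  rw [Set.disjoint_left]
  intro ω h1 h2
  apply hj
  have e1 := h1 j.val (by omega)
  have e2 := h2 j.val (by omega)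
  rw [extP_le n w j.val (by omega)] at e1
  rw [extP_le n w' j.val (by omega)] at e2
  have : (⟨j.val, by omega⟩ : Fin (n + 1)) = j := by ext; rfl
  rw [this] at e1 e2
  exact e1 ▸ e2 ▸ rfl

/-- first hit of J at time k -/
def FH (J : Set ℕ) (k : ℕ) : Set (ℕ → ℕ) := {ω | ω k ∈ J ∧ ∀ j < k, ω j ∉ J}

lemma FH_det (J : Set ℕ) (k : ℕ) (ω ω' : ℕ → ℕ) (h : ∀ j ≤ k, ω j = ω' j) :
    ω ∈ FH J k → ω' ∈ FH J k := by
  rintro ⟨h1, h2⟩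
  exact ⟨h k le_rfl ▸ h1, fun j hj hj' => h2 j hj ((h j (by omega)) ▸ hj')⟩

lemma FH_disjoint (J : Set ℕ) (k k' : ℕ) (h : k ≠ k') : Disjoint (FH J k) (FH J k') := by
  rw [Set.disjoint_left]
  rintro ω ⟨h1, h2⟩ ⟨h1', h2'⟩
  rcases Nat.lt_or_ge k k' with hlt | hge
  · exact h2' k hlt h1
  · exact h2 k' (by omega) h1'

/-- the canonical prefix-cylinder decomposition of `HitS J` -/
def hitCyl (J : Set ℕ) (t : Σ k : ℕ, Fin (k + 1) → ℕ) : Set (ℕ → ℕ) :=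
  if extP t.1 t.2 ∈ FH J t.1 then Pre (extP t.1 t.2) t.1 else ∅

lemma hitCyl_sub_FH (J : Set ℕ) (t : Σ k : ℕ, Fin (k + 1) → ℕ) :
    hitCyl J t ⊆ FH J t.1 := by
  unfold hitCyl
  split_ifs with h
  · intro ω hω
    refine FH_det J t.1 (extP t.1 t.2) ω ?_ h
    intro j hj
    exact (hω j hj).symm
  · exact Set.empty_subset _

lemma hitS_eq_iUnion (J : Set ℕ) : HitS J = ⋃ t : Σ k : ℕ, Fin (k + 1) → ℕ, hitCyl J t := by
  ext ω
  constructor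
  · rintro (hω : ∃ k, ω k ∈ J)
    set k := Nat.find hω with hk
    have hmem : ω ∈ FH J k := ⟨Nat.find_spec hω, fun j hj => Nat.find_min hω hj⟩
    refine Set.mem_iUnion.mpr ⟨⟨k, fun j => ω j.val⟩, ?_⟩
    unfold hitCyl
    rw [if_pos]
    · exact mem_pre_extP_restrict k ω
    · exact FH_det J k ω _ (fun j hj => (extP_restrict k ω j hj).symm) hmem
  · intro hω
    obtain ⟨t, ht⟩ := Set.mem_iUnion.mp hω
    exact ⟨t.1, (hitCyl_sub_FH J t ht).1⟩

lemma hitCyl_disjoint (J : Set ℕ) : Pairwise (Function.onFun Disjoint (hitCyl J)) := by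
  rintro ⟨k, w⟩ ⟨k', w'⟩ hne
  simp only [Function.onFun]
  by_cases hk : k = k'
  · subst hk
    have hw : w ≠ w' := by
      intro h; exact hne (by rw [h])
    unfold hitCyl
    dsimp only
    split_ifs with h1 h2 h2
    · exact pre_disjoint k w w' hw
    all_goals simp
  · exact Set.disjoint_of_subset (hitCyl_sub_FH J _) (hitCyl_sub_FH J _) (FH_disjoint J k k' hk)

lemma meas_hitCyl (J : Set ℕ) (t : Σ k : ℕ, Fin (k + 1) → ℕ) : MeasurableSet (hitCyl J t) := by
  unfold hitCyl
  split_ifs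
  · exact meas_Pre _ _
  · exact MeasurableSet.empty

variable (X : MarkovChain ℕ)

lemma law_hitCyl_sum (j : ℕ) (J : Set ℕ) :
    X.law j (HitS J) = ∑' t : Σ k : ℕ, Fin (k + 1) → ℕ, X.law j (hitCyl J t) := by
  rw [hitS_eq_iUnion J]
  exact measure_iUnion (hitCyl_disjoint J) (meas_hitCyl J)

/-- Markov property: prefix followed by hitting event -/
lemma law_pre_shift_hit (i n : ℕ) (y : ℕ → ℕ) (hy : y 0 = i) (J : Set ℕ) :
    X.law i (Pre y n ∩ shiftP n ⁻¹' HitS J) =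
      (∏ k ∈ Finset.range n, X.p (y k) (y (k + 1))) * X.law (y n) (HitS J) := by
  have hdec : Pre y n ∩ shiftP n ⁻¹' HitS J
      = ⋃ t : Σ k : ℕ, Fin (k + 1) → ℕ, Pre y n ∩ shiftP n ⁻¹' hitCyl J t := by
    rw [hitS_eq_iUnion J, Set.preimage_iUnion, Set.inter_iUnion]
  rw [hdec, measure_iUnion, law_hitCyl_sum X (y n) J, ENNReal.tsum_mul_left.symm]
  · congr 1
    ext t
    unfold hitCyl
    split_ifs with h
    · exact law_pre_shift_pre X i n t.1 y (extP t.1 t.2) hy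
    · simp
  · intro t t' htt'
    have := hitCyl_disjoint J htt'
    exact Set.disjoint_of_subset Set.inter_subset_right Set.inter_subset_right
      (this.preimage (shiftP n))
  · intro t
    exact (meas_Pre y n).inter ((meas_shiftP n) (meas_hitCyl J t))
end L510
namespace L510

variable (X : MarkovChain ℕ)

lemma markov_det_hit (i n u : ℕ) (D : Set (ℕ → ℕ)) (J : Set ℕ)
    (hD : ∀ ω ω', (∀ k ≤ n, ω k = ω' k) → ω ∈ D → ω' ∈ D)
    (hu : ∀ ω ∈ D, ω n = u) :
    X.law i (D ∩ shiftP n ⁻¹' HitS J) = X.law i D * X.law u (HitS J) := by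
  set C : (Fin (n + 1) → ℕ) → Set (ℕ → ℕ) :=
    fun w => if extP n w ∈ D then Pre (extP n w) n else ∅ with hC
  have hmeasC : ∀ w, MeasurableSet (C w) := by
    intro w; rw [hC]; dsimp only
    split_ifs
    · exact meas_Pre _ _
    · exact MeasurableSet.empty
  have hdisjC : Pairwise (Function.onFun Disjoint C) := by
    intro w w' hww'
    simp only [Function.onFun, hC]
    split_ifs with h1 h2 h2
    · exact pre_disjoint n w w' hww'
    all_goals simp
  have hDeq : D = ⋃ w, C w := by
    ext ω
    constructor
    · intro hω
      refine Set.mem_iUnion.mpr ⟨fun j => ω j.val, ?_⟩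
      rw [hC]; dsimp only
      rw [if_pos (hD ω _ (fun k hk => (extP_restrict n ω k hk).symm) hω)]
      exact mem_pre_extP_restrict n ω
    · intro hω
      obtain ⟨w, hw⟩ := Set.mem_iUnion.mp hω
      rw [hC] at hw; dsimp only at hw
      split_ifs at hw with hmem
      · exact hD _ ω (fun k hk => (hw k hk).symm) hmem
      · exact absurd hw (Set.notMem_empty ω)
  have hterm : ∀ w, X.law i (C w ∩ shiftP n ⁻¹' HitS J) = X.law i (C w) * X.law u (HitS J) := by
    intro w
    rw [hC]; dsimp only
    split_ifs with hmem
    · by_cases hw0 : extP n w 0 = i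
      · rw [law_pre_shift_hit X i n _ hw0 J, law_pre X i n _ hw0]
        rw [hu _ hmem]
      · have h0 : X.law i (Pre (extP n w) n) = 0 := law_pre_ne X i n _ hw0
        rw [h0, zero_mul]
        exact measure_mono_null Set.inter_subset_left h0
    · simp
  calc X.law i (D ∩ shiftP n ⁻¹' HitS J)
      = X.law i (⋃ w, C w ∩ shiftP n ⁻¹' HitS J) := by
        rw [hDeq, Set.iUnion_inter]
    _ = ∑' w, X.law i (C w ∩ shiftP n ⁻¹' HitS J) := by
        refine measure_iUnion ?_ ?_
        · intro w w' hww'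
          exact Set.disjoint_of_subset Set.inter_subset_left Set.inter_subset_left
            (hdisjC hww')
        · intro w
          exact (hmeasC w).inter ((meas_shiftP n) (meas_HitS J))
    _ = ∑' w, X.law i (C w) * X.law u (HitS J) := by
        congr 1; ext w; exact hterm w
    _ = (∑' w, X.law i (C w)) * X.law u (HitS J) := ENNReal.tsum_mul_right
    _ = X.law i D * X.law u (HitS J) := by
        rw [hDeq, measure_iUnion hdisjC hmeasC]

lemma shift_hit_sub (n : ℕ) (J : Set ℕ) : shiftP n ⁻¹' HitS J ⊆ HitS J := by
  rintro ω ⟨k, hk⟩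
  exact ⟨n + k, hk⟩

lemma law_hit_step (i j n : ℕ) (J : Set ℕ) :
    X.law i {ω | ω n = j} * X.law j (HitS J) ≤ X.law i (HitS J) := by
  rw [← markov_det_hit X i n j {ω | ω n = j} J
    (fun ω ω' h hω => by simp only [Set.mem_setOf_eq] at *; rw [← h n le_rfl]; exact hω)
    (fun ω hω => hω)]
  exact measure_mono (Set.inter_subset_right.trans (shift_hit_sub n J))

end L510
namespace L510

lemma FHu_sub_FH (I : Set ℕ) (n u : ℕ) : FHu I n u ⊆ FH I n :=
  fun _ h => ⟨h.2.1, h.2.2⟩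

lemma FHu_disjoint (I : Set ℕ) {n u n' u' : ℕ} (h : n ≠ n' ∨ u ≠ u') :
    Disjoint (FHu I n u) (FHu I n' u') := by
  by_cases hn : n = n'
  · subst hn
    rcases h with h | h
    · exact absurd rfl h
    · rw [Set.disjoint_left]
      rintro ω ⟨e1, _⟩ ⟨e2, _⟩
      exact h (e1 ▸ e2 ▸ rfl)
  · exact Set.disjoint_of_subset (FHu_sub_FH I n u) (FHu_sub_FH I n' u')
      (FH_disjoint I n n' hn)

lemma FHu_det (I : Set ℕ) (n u : ℕ) (ω ω' : ℕ → ℕ) (h : ∀ k ≤ n, ω k = ω' k) :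
    ω ∈ FHu I n u → ω' ∈ FHu I n u := by
  rintro ⟨h1, h2, h3⟩
  refine ⟨(h n le_rfl) ▸ h1, (h n le_rfl) ▸ h2, fun j hj hj' => h3 j hj ?_⟩
  rw [h j (by omega)]
  exact hj'

variable (X : MarkovChain ℕ)

lemma law_etaNum (y u : ℕ) (I : Set ℕ) :
    X.law y {ω | ∃ n : ℕ, etaTime I ω = (n : ℕ∞) ∧ ω n = u} =
      ∑' n, X.law y (FHu I n u) := by
  rw [etaNum_eq]
  exact measure_iUnion (fun n n' h => FHu_disjoint I (Or.inl h)) (fun n => meas_FHu I n u)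

lemma law_hitI_eq_sum (y a B : ℕ) :
    X.law y (HitS (Set.Icc a (a + B))) =
      ∑ u ∈ Finset.Icc a (a + B), X.law y (⋃ n, FHu (Set.Icc a (a + B)) n u) := by
  set I := Set.Icc a (a + B) with hI
  have hset : HitS I = ⋃ u ∈ Finset.Icc a (a + B), ⋃ n, FHu I n u := by
    ext ω
    constructor
    · rintro (hω : ∃ k, ω k ∈ I)
      set n := Nat.find hω with hn
      have hspec : ω n ∈ I := Nat.find_spec hω
      refine Set.mem_biUnion ?_ (Set.mem_iUnion.mpr ⟨n, rfl, hspec,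
        fun j hj => Nat.find_min hω hj⟩)
      exact Finset.mem_Icc.mpr hspec
    · intro hω
      obtain ⟨u, _, hu⟩ := Set.mem_iUnion₂.mp hω
      obtain ⟨n, _, hn, _⟩ := Set.mem_iUnion.mp hu
      exact ⟨n, hn⟩
  rw [hset, measure_biUnion_finset]
  · intro u hu u' hu' huu'
    simp only [Function.onFun]
    rw [Set.disjoint_iUnion_left]
    intro n
    rw [Set.disjoint_iUnion_right]
    intro n'
    exact FHu_disjoint I (Or.inr huu')
  · intro u _
    exact MeasurableSet.iUnion (fun n => meas_FHu I n u)

lemma crossing (B a : ℕ) (ω : ℕ → ℕ)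
    (hj : ∀ n, ((ω (n + 1) : ℤ) - (ω n : ℤ)).natAbs ≤ B)
    (h0 : a + B < ω 0) {K : ℕ} (hK : ω K < a) :
    ∃ j, j ≤ K ∧ a ≤ ω j ∧ ω j ≤ a + B := by
  have hex : ∃ j, ω j ≤ a + B := ⟨K, by omega⟩
  refine ⟨Nat.find hex, Nat.find_min' hex (by omega), ?_, Nat.find_spec hex⟩
  have hne : Nat.find hex ≠ 0 := by
    intro h
    have := Nat.find_spec hex
    rw [h] at this
    omega
  obtain ⟨j', hj'⟩ : ∃ j', Nat.find hex = j' + 1 := ⟨Nat.find hex - 1, by omega⟩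
  have hminj : ¬ (ω j' ≤ a + B) := Nat.find_min hex (by omega)
  have := hj j'
  rw [hj']
  omega

lemma meas_jump (B n : ℕ) :
    MeasurableSet {ω : ℕ → ℕ | ((ω (n + 1) : ℤ) - (ω n : ℤ)).natAbs ≤ B} := by
  have hf : Measurable fun ω : ℕ → ℕ => ((ω (n + 1) : ℤ) - (ω n : ℤ)).natAbs := by
    have hc : Measurable (fun k : ℕ => (k : ℤ)) := measurable_from_top
    have hna : Measurable Int.natAbs := measurable_from_top
    have h1 : Measurable fun ω : ℕ → ℕ => (ω (n + 1) : ℤ) :=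
      hc.comp (measurable_pi_apply (n + 1))
    have h2 : Measurable fun ω : ℕ → ℕ => (ω n : ℤ) :=
      hc.comp (measurable_pi_apply n)
    exact hna.comp (h1.sub h2)
  exact hf (measurableSet_nat (Set.Iic B))

lemma law_bad_null (B y : ℕ) (hB : AssumptionB X B) :
    X.law y {ω : ℕ → ℕ | ω 0 = y ∧ ∀ n, ((ω (n + 1) : ℤ) - (ω n : ℤ)).natAbs ≤ B}ᶜ = 0 := by
  haveI := X.law_prob y
  have hsub : {ω : ℕ → ℕ | ω 0 = y ∧ ∀ n, ((ω (n + 1) : ℤ) - (ω n : ℤ)).natAbs ≤ B}ᶜ ⊆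
      {ω : ℕ → ℕ | ω 0 = y}ᶜ ∪
        ⋃ n, {ω : ℕ → ℕ | ((ω (n + 1) : ℤ) - (ω n : ℤ)).natAbs ≤ B}ᶜ := by
    intro ω hω
    simp only [Set.mem_compl_iff, Set.mem_setOf_eq, not_and, not_forall] at hω
    by_cases h0 : ω 0 = y
    · obtain ⟨n, hn⟩ := hω h0
      exact Or.inr (Set.mem_iUnion.mpr ⟨n, hn⟩)
    · exact Or.inl h0
  refine measure_mono_null hsub (measure_union_null ?_ (measure_iUnion_null ?_))
  · have hm : MeasurableSet {ω : ℕ → ℕ | ω 0 = y} := by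
      have : {ω : ℕ → ℕ | ω 0 = y} = {ω : ℕ → ℕ | ω 0 ∈ ({y} : Set ℕ)} := by ext; simp
      rw [this]; exact meas_eval 0 {y}
    rw [measure_compl hm (measure_ne_top _ _), law_zero_eq, measure_univ]
    simp
  · intro n
    rw [measure_compl (meas_jump B n) (measure_ne_top _ _), hB y n, measure_univ]
    simp

lemma law_inter_good {y : ℕ} {G S : Set (ℕ → ℕ)} (hG : X.law y Gᶜ = 0) :
    X.law y S = X.law y (S ∩ G) := by
  refine le_antisymm ?_ (measure_mono Set.inter_subset_left)
  calc X.law y S ≤ X.law y ((S ∩ G) ∪ Gᶜ) := by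
        refine measure_mono ?_
        intro ω hω
        by_cases h : ω ∈ G
        · exact Or.inl ⟨hω, h⟩
        · exact Or.inr h
    _ ≤ X.law y (S ∩ G) + X.law y Gᶜ := measure_union_le _ _
    _ = X.law y (S ∩ G) := by rw [hG, add_zero]

lemma law_hit0_decomp (y a B : ℕ) (hB : AssumptionB X B) (ha : 1 ≤ a) (hy : a + B < y) :
    X.law y (HitS {0}) = ∑ u ∈ Finset.Icc a (a + B),
      X.law y (⋃ n, FHu (Set.Icc a (a + B)) n u) * X.law u (HitS {0}) := by
  set I := Set.Icc a (a + B) with hI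
  set G := {ω : ℕ → ℕ | ω 0 = y ∧ ∀ n, ((ω (n + 1) : ℤ) - (ω n : ℤ)).natAbs ≤ B} with hG
  set T := ⋃ u ∈ Finset.Icc a (a + B), ⋃ n, (FHu I n u ∩ shiftP n ⁻¹' HitS {0}) with hT
  have hTsub : T ⊆ HitS {0} := by
    intro ω hω
    obtain ⟨u, _, hu⟩ := Set.mem_iUnion₂.mp hω
    obtain ⟨n, _, hn⟩ := Set.mem_iUnion.mp hu
    exact shift_hit_sub n {0} hn
  have hsub : HitS {0} ∩ G ⊆ T := by
    rintro ω ⟨⟨K, hK0⟩, hω0, hjump⟩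
    have hK0' : ω K = 0 := hK0
    have hKa : ω K < a := by omega
    have h00 : a + B < ω 0 := by rw [hω0]; exact hy
    obtain ⟨j, hjK, hj1, hj2⟩ := crossing B a ω hjump h00 hKa
    have hex : ∃ n, ω n ∈ I := ⟨j, hj1, hj2⟩
    set n := Nat.find hex with hn
    have hspec : ω n ∈ I := Nat.find_spec hex
    have hnK : n ≤ K := le_trans (Nat.find_min' hex ⟨hj1, hj2⟩) hjK
    refine Set.mem_biUnion ?_ (Set.mem_iUnion.mpr ⟨n, ⟨rfl, hspec,
      fun j' hj' => Nat.find_min hex hj'⟩, ?_⟩)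
    · exact Finset.mem_Icc.mpr hspec
    · refine ⟨K - n, ?_⟩
      show ω (n + (K - n)) ∈ ({0} : Set ℕ)
      rw [Nat.add_sub_cancel' hnK]
      exact hK0
  have hmeq : X.law y (HitS {0}) = X.law y T := by
    refine le_antisymm ?_ (measure_mono hTsub)
    calc X.law y (HitS {0}) = X.law y (HitS {0} ∩ G) :=
          law_inter_good X (law_bad_null X B y hB)
      _ ≤ X.law y T := measure_mono hsub
  rw [hmeq, hT, measure_biUnion_finset]
  · refine Finset.sum_congr rfl ?_
    intro u _
    rw [measure_iUnion, measure_iUnion]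
    · rw [← ENNReal.tsum_mul_right]
      congr 1
      ext n
      exact markov_det_hit X y n u (FHu I n u) {0} (FHu_det I n u)
        (fun ω hω => hω.1)
    · exact fun n n' h => FHu_disjoint I (Or.inl h)
    · exact fun n => meas_FHu I n u
    · intro n n' h
      exact Set.disjoint_of_subset Set.inter_subset_left Set.inter_subset_left
        (FHu_disjoint I (Or.inl h))
    · exact fun n => (meas_FHu I n u).inter ((meas_shiftP n) (meas_HitS {0}))
  · intro u hu u' hu' huu'
    simp only [Function.onFun]
    rw [Set.disjoint_iUnion_left]
    intro n
    rw [Set.disjoint_iUnion_right]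
    intro n'
    exact Set.disjoint_of_subset Set.inter_subset_left Set.inter_subset_left
      (FHu_disjoint I (Or.inr huu'))
  · intro u _
    exact MeasurableSet.iUnion
      (fun n => (meas_FHu I n u).inter ((meas_shiftP n) (meas_HitS {0})))

end L510
namespace L510

variable (X : MarkovChain ℕ)

lemma hitProb_eq (i : ℕ) : hitProb X 0 i = X.law i (HitS {0}) := by
  unfold hitProb HitS
  congr 1

lemma etaHitProb_eq (B a x : ℕ) :
    etaHitProb X B a x = X.law x (HitS (Set.Icc a (a + B))) :=
  congrArg _ (etaTime_ne_top _)

lemma entranceProb_eq (B a y u : ℕ) :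
    entranceProb X B a y u = (X.law y (⋃ n, FHu (Set.Icc a (a + B)) n u)).toReal /
      (X.law y (HitS (Set.Icc a (a + B)))).toReal := by
  unfold entranceProb
  rw [ENNReal.toReal_div]
  congr 2
  · exact congrArg _ (etaNum_eq _ _)
  · exact congrArg _ (etaTime_ne_top _)

lemma law_ne_top (i : ℕ) (S : Set (ℕ → ℕ)) : X.law i S ≠ ⊤ := by
  haveI := X.law_prob i
  exact measure_ne_top _ _

lemma law_le_one (i : ℕ) (S : Set (ℕ → ℕ)) : X.law i S ≤ 1 := by
  haveI := X.law_prob i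
  exact prob_le_one

lemma hit_comp {ε : ENNReal} {m B : ℕ} (hIW : AssumptionIWith X B ε m) (i j : ℕ)
    (hij : ((j : ℤ) - (i : ℤ)).natAbs ≤ B) (J : Set ℕ) :
    ε * X.law j (HitS J) ≤ X.law i (HitS J) := by
  obtain ⟨n, _, _, hn⟩ := hIW.2.2 i j hij
  calc ε * X.law j (HitS J) ≤ X.law i {ω | ω n = j} * X.law j (HitS J) :=
        mul_le_mul_left hn _
    _ ≤ X.law i (HitS J) := law_hit_step X i j n J

lemma hit_pos (hirr : X.Irred) (i j : ℕ) (J : Set ℕ) (hj : j ∈ J) :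
    0 < X.law i (HitS J) := by
  obtain ⟨n, hn⟩ := hirr i j
  refine lt_of_lt_of_le hn (measure_mono ?_)
  intro ω hω
  exact ⟨n, hω ▸ hj⟩

lemma eps_le_one {ε : ENNReal} {m B : ℕ} (hIW : AssumptionIWith X B ε m) : ε ≤ 1 := by
  obtain ⟨n, _, _, hn⟩ := hIW.2.2 0 0 (by simp)
  exact hn.trans (law_le_one X _ _)

lemma eps_toReal_pos {ε : ENNReal} {m B : ℕ} (hIW : AssumptionIWith X B ε m) :
    0 < ε.toReal :=
  ENNReal.toReal_pos hIW.1.ne' (lt_of_le_of_lt (eps_le_one X hIW) (by norm_num)).ne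

/-- real version of comparison -/
lemma hit_comp_real {ε : ENNReal} {m B : ℕ} (hIW : AssumptionIWith X B ε m) (i j : ℕ)
    (hij : ((j : ℤ) - (i : ℤ)).natAbs ≤ B) (J : Set ℕ) :
    ε.toReal * (X.law j (HitS J)).toReal ≤ (X.law i (HitS J)).toReal := by
  have h := hit_comp X hIW i j hij J
  have := ENNReal.toReal_mono (law_ne_top X i (HitS J)) h
  rwa [ENNReal.toReal_mul] at this

lemma hit_pos_real (hirr : X.Irred) (i j : ℕ) (J : Set ℕ) (hj : j ∈ J) :
    0 < (X.law i (HitS J)).toReal :=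
  ENNReal.toReal_pos (hit_pos X hirr i j J hj).ne' (law_ne_top X i _)

end L510
namespace L510

lemma ratio_bound (s : Finset ℕ) (qx qy hrf : ℕ → ℝ) (Sx Sy Hx Hy mv Mv d C : ℝ)
    (hqx0 : ∀ u ∈ s, 0 ≤ qx u)
    (hqx1 : ∑ u ∈ s, qx u = 1)
    (hHlo : ∀ u ∈ s, mv ≤ hrf u) (hHhi : ∀ u ∈ s, hrf u ≤ Mv)
    (hm : 0 < mv)
    (hq : ∀ u ∈ s, |qy u - qx u| ≤ d)
    (hSx : 0 < Sx) (hS : Sy ≤ C * Sx) (hSy : 0 ≤ Sy) (hC : 0 ≤ C)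
    (hHx : Hx = Sx * ∑ u ∈ s, qx u * hrf u) (hHy : Hy = Sy * ∑ u ∈ s, qy u * hrf u) :
    |Hy / Hx - Sy / Sx| ≤ C * ((s.card : ℝ) * (d * Mv)) / mv := by
  set Nx := ∑ u ∈ s, qx u * hrf u with hNx
  set Ny := ∑ u ∈ s, qy u * hrf u with hNy
  have hhr0 : ∀ u ∈ s, 0 ≤ hrf u := fun u hu => le_trans hm.le (hHlo u hu)
  have hNxlo : mv ≤ Nx := by
    calc mv = mv * ∑ u ∈ s, qx u := by rw [hqx1, mul_one]
      _ = ∑ u ∈ s, qx u * mv := by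
          rw [Finset.mul_sum]
          exact Finset.sum_congr rfl (fun u _ => mul_comm _ _)
      _ ≤ Nx := Finset.sum_le_sum (fun u hu =>
          mul_le_mul_of_nonneg_left (hHlo u hu) (hqx0 u hu))
  have hNxpos : 0 < Nx := lt_of_lt_of_le hm hNxlo
  have hdMv : ∀ u ∈ s, |qy u - qx u| * hrf u ≤ d * Mv := by
    intro u hu
    have hd0 : (0 : ℝ) ≤ d := le_trans (abs_nonneg _) (hq u hu)
    exact mul_le_mul (hq u hu) (hHhi u hu) (hhr0 u hu) hd0
  have hdiff : |Ny - Nx| ≤ (s.card : ℝ) * (d * Mv) := by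
    have h1 : Ny - Nx = ∑ u ∈ s, (qy u - qx u) * hrf u := by
      rw [hNy, hNx, ← Finset.sum_sub_distrib]
      exact Finset.sum_congr rfl (fun u _ => (sub_mul _ _ _).symm)
    rw [h1]
    calc |∑ u ∈ s, (qy u - qx u) * hrf u| ≤ ∑ u ∈ s, |(qy u - qx u) * hrf u| :=
          Finset.abs_sum_le_sum_abs _ _
      _ ≤ ∑ u ∈ s, d * Mv := Finset.sum_le_sum (fun u hu => by
          rw [abs_mul, abs_of_nonneg (hhr0 u hu)]; exact hdMv u hu)
      _ = (s.card : ℝ) * (d * Mv) := by rw [Finset.sum_const, nsmul_eq_mul]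
  have hkey : Hy / Hx - Sy / Sx = Sy / Sx * ((Ny - Nx) / Nx) := by
    rw [hHx, hHy]
    field_simp
  rw [hkey, abs_mul, abs_div, abs_div, abs_of_nonneg hSy, abs_of_nonneg hSx.le,
    abs_of_nonneg hNxpos.le]
  have h2 : Sy / Sx ≤ C := (div_le_iff₀ hSx).mpr hS
  have h3 : |Ny - Nx| / Nx ≤ (s.card : ℝ) * (d * Mv) / mv :=
    div_le_div₀ (le_trans (abs_nonneg _) hdiff) hdiff hm hNxlo
  calc Sy / Sx * (|Ny - Nx| / Nx) ≤ C * ((s.card : ℝ) * (d * Mv) / mv) :=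
        mul_le_mul h2 h3 (div_nonneg (abs_nonneg _) hNxpos.le) hC
    _ = C * ((s.card : ℝ) * (d * Mv)) / mv := by ring

end L510
namespace L510

variable (X : MarkovChain ℕ)

lemma main_bound {ε : ENNReal} {m B : ℕ} (hIW : AssumptionIWith X B ε m)
    (hB : AssumptionB X B) (hirr : X.Irred) (a x y : ℕ) (d : ℝ)
    (ha : 1 ≤ a) (hax : a + B < x) (hay : a + B < y)
    (hyx : ((y : ℤ) - (x : ℤ)).natAbs ≤ B)
    (hq : ∀ u ∈ Finset.Icc a (a + B),
      |entranceProb X B a y u - entranceProb X B a x u| ≤ d) :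
    |(X.law y (HitS {0})).toReal / (X.law x (HitS {0})).toReal -
        (X.law y (HitS (Set.Icc a (a + B)))).toReal /
          (X.law x (HitS (Set.Icc a (a + B)))).toReal| ≤
      (1 / ε.toReal) * (((B : ℝ) + 1) *
        (d * ((X.law a (HitS {0})).toReal / ε.toReal))) /
        (ε.toReal * (X.law a (HitS {0})).toReal) := by
  set I := Set.Icc a (a + B) with hI
  set s := Finset.Icc a (a + B) with hs
  set εr := ε.toReal with hεr
  have hεpos : 0 < εr := eps_toReal_pos X hIW
  set hrf : ℕ → ℝ := fun u => (X.law u (HitS {0})).toReal with hhrf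
  set ee : ℕ → ℕ → ℝ := fun w u => (X.law w (⋃ n, FHu I n u)).toReal with hee
  have hra : 0 < hrf a := hit_pos_real X hirr a 0 {0} rfl
  have hSxpos : 0 < (X.law x (HitS I)).toReal :=
    hit_pos_real X hirr x a I ⟨le_refl a, by omega⟩
  have hSypos : 0 < (X.law y (HitS I)).toReal :=
    hit_pos_real X hirr y a I ⟨le_refl a, by omega⟩
  -- sums of ee equal S
  have hsum : ∀ w : ℕ, (X.law w (HitS I)).toReal = ∑ u ∈ s, ee w u := by
    intro w
    rw [law_hitI_eq_sum X w a B, ENNReal.toReal_sum]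
    intro u _
    exact law_ne_top X w _
  -- entranceProb in terms of ee
  have hqe : ∀ w u : ℕ, entranceProb X B a w u = ee w u / (X.law w (HitS I)).toReal :=
    fun w u => entranceProb_eq X B a w u
  -- decomposition of hr
  have hdec : ∀ w : ℕ, a + B < w →
      (X.law w (HitS {0})).toReal = ∑ u ∈ s, ee w u * hrf u := by
    intro w hw
    rw [law_hit0_decomp X w a B hB ha hw, ENNReal.toReal_sum]
    · exact Finset.sum_congr rfl (fun u _ => ENNReal.toReal_mul)
    · intro u _
      exact ENNReal.mul_ne_top (law_ne_top X w _) (law_ne_top X u _)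
  have habs : ∀ u ∈ s, ((a : ℤ) - (u : ℤ)).natAbs ≤ B ∧ ((u : ℤ) - (a : ℤ)).natAbs ≤ B := by
    intro u hu
    rw [hs, Finset.mem_Icc] at hu
    omega
  refine le_trans (ratio_bound s (entranceProb X B a x) (entranceProb X B a y)
    hrf (X.law x (HitS I)).toReal (X.law y (HitS I)).toReal
    (X.law x (HitS {0})).toReal (X.law y (HitS {0})).toReal
    (εr * hrf a) (hrf a / εr) d (1 / εr)
    (fun u _ => ENNReal.toReal_nonneg)
    ?_ ?_ ?_ (mul_pos hεpos hra) (fun u hu => hq u hu) hSxpos ?_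
    ENNReal.toReal_nonneg (by positivity) ?_ ?_) (le_of_eq ?_)
  · -- sum of qx = 1
    have : ∑ u ∈ s, entranceProb X B a x u = (∑ u ∈ s, ee x u) / (X.law x (HitS I)).toReal := by
      rw [Finset.sum_div]
      exact Finset.sum_congr rfl (fun u _ => hqe x u)
    rw [this, ← hsum x, div_self hSxpos.ne']
  · -- lower bound on hrf
    intro u hu
    have := hit_comp_real X hIW u a (habs u hu).1 {0}
    exact this
  · -- upper bound on hrf
    intro u hu
    have h1 := hit_comp_real X hIW a u (habs u hu).2 {0}
    rw [le_div_iff₀ hεpos]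
    calc hrf u * εr = εr * (X.law u (HitS {0})).toReal := by rw [mul_comm]
      _ ≤ (X.law a (HitS {0})).toReal := h1
  · -- Sy ≤ (1/εr) * Sx
    have h1 := hit_comp_real X hIW x y hyx I
    rw [div_mul_eq_mul_div, one_mul, le_div_iff₀ hεpos]
    calc (X.law y (HitS I)).toReal * εr = εr * (X.law y (HitS I)).toReal := mul_comm _ _
      _ ≤ (X.law x (HitS I)).toReal := h1
  · -- Hx decomposition
    have hne := hSxpos.ne'
    rw [hdec x hax, Finset.mul_sum]
    refine Finset.sum_congr rfl (fun u hu => ?_)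
    rw [hqe x u]
    field_simp
  · -- Hy decomposition
    have hne := hSypos.ne'
    rw [hdec y hay, Finset.mul_sum]
    refine Finset.sum_congr rfl (fun u hu => ?_)
    rw [hqe y u]
    field_simp
  · -- card
    have hcard : ((s.card : ℕ) : ℝ) = (B : ℝ) + 1 := by
      rw [hs, Nat.card_Icc]
      have h' : a + B + 1 - a = B + 1 := by omega
      rw [h']
      push_cast
      ring
    rw [hcard]

end L510
namespace L510

variable (X : MarkovChain ℕ)

lemma meas_eval_eq (k j : ℕ) : MeasurableSet {ω : ℕ → ℕ | ω k = j} := by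
  have : {ω : ℕ → ℕ | ω k = j} = {ω : ℕ → ℕ | ω k ∈ ({j} : Set ℕ)} := by ext; simp
  rw [this]; exact meas_eval k {j}

lemma law_zero_compl (i : ℕ) : X.law i {ω | ω 0 = i}ᶜ = 0 := by
  haveI := X.law_prob i
  rw [measure_compl (meas_eval_eq 0 i) (measure_ne_top _ _), law_zero_eq, measure_univ]
  simp

lemma b0_false (hB : AssumptionB X 0) (hirr : X.Irred) : False := by
  have hstay : ∀ n, X.law 0 {ω | ω n = 0}ᶜ = 0 := by
    intro n
    induction n with
    | zero => exact law_zero_compl X 0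
    | succ n ih =>
      have hjump : X.law 0 {ω : ℕ → ℕ | ((ω (n + 1) : ℤ) - (ω n : ℤ)).natAbs ≤ 0}ᶜ = 0 := by
        haveI := X.law_prob 0
        rw [measure_compl (meas_jump 0 n) (measure_ne_top _ _), hB 0 n, measure_univ]
        simp
      refine measure_mono_null ?_ (measure_union_null ih hjump)
      intro ω hω
      simp only [Set.mem_compl_iff, Set.mem_union, Set.mem_setOf_eq] at hω ⊢
      by_cases h1 : ω n = 0
      · exact Or.inr (fun hc => hω (by omega))
      · exact Or.inl h1
  obtain ⟨n, hn⟩ := hirr 0 1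
  have : X.law 0 {ω | ω n = 1} = 0 := by
    refine measure_mono_null ?_ (hstay n)
    intro ω hω
    simp only [Set.mem_setOf_eq] at hω
    simp [Set.mem_compl_iff, hω]
  rw [this] at hn
  exact lt_irrefl 0 hn

lemma entrance_inside (a B w u : ℕ) (hw : w ∈ Set.Icc a (a + B)) :
    entranceProb X B a w u = if u = w then 1 else 0 := by
  set I := Set.Icc a (a + B) with hI
  haveI := X.law_prob w
  have hden : X.law w {ω | etaTime I ω ≠ ⊤} = 1 := by
    refine le_antisymm (law_le_one X _ _) ?_
    rw [etaTime_ne_top]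
    calc (1 : ENNReal) = X.law w {ω | ω 0 = w} := (law_zero_eq X w).symm
      _ ≤ X.law w (HitS I) := measure_mono (fun ω hω => ⟨0, by rw [Set.mem_setOf_eq] at hω; rw [hω]; exact hw⟩)
  have hnum : X.law w {ω | ∃ n : ℕ, etaTime I ω = (n : ℕ∞) ∧ ω n = u} =
      if u = w then 1 else 0 := by
    rw [etaNum_eq]
    rw [law_inter_good X (law_zero_compl X w) (S := ⋃ n, FHu I n u)]
    have hseteq : (⋃ n, FHu I n u) ∩ {ω | ω 0 = w} =
        if u = w then {ω : ℕ → ℕ | ω 0 = w} else ∅ := by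
      split_ifs with huw
      · subst huw
        ext ω
        constructor
        · exact fun h => h.2
        · intro h
          refine ⟨Set.mem_iUnion.mpr ⟨0, h, ?_, fun j hj => absurd hj (Nat.not_lt_zero j)⟩, h⟩
          rw [Set.mem_setOf_eq] at h
          rw [h]; exact hw
      · ext ω
        simp only [Set.mem_inter_iff, Set.mem_iUnion, Set.mem_empty_iff_false, iff_false,
          not_and]
        rintro ⟨n, hn1, hn2, hn3⟩ h0
        rw [Set.mem_setOf_eq] at h0
        rcases Nat.eq_zero_or_pos n with hn0 | hn0
        · subst hn0
          exact huw (hn1 ▸ h0 ▸ rfl)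
        · exact hn3 0 hn0 (h0 ▸ hw)
    rw [hseteq]
    split_ifs
    · exact law_zero_eq X w
    · exact measure_empty
  unfold entranceProb
  rw [← hI, hnum, hden]
  split_ifs
  · simp
  · simp

end L510
/-- Lemma 5.10: there is a constant `A₀` (any admissible constant `A_{γ_c+3}` from the
quantitative entrance-distribution stabilization with `δ = γ_c + 3` will do) such that
for every `A ≥ A₀`, with `a(x) = x - ⌊A log x⌋`,
`sup_{|z| ≤ B} |h(x+z)/h(x) - Pr_{x+z}(η_{I_{a(x)}} < ∞)/Pr_x(η_{I_{a(x)}} < ∞)| = O(x^{-2})`. -/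
theorem ratio_via_eta_hitting (X : MarkovChain ℕ) (B : ℕ) (c s2 : ℝ)
    (hirr : X.Irred) (hB : AssumptionB X B) (hI : AssumptionI X B)
    (hL : AssumptionL X c s2) (θ : ℕ → ℕ → ℝ)
    (hθ : ∀ a u : ℕ, u ∈ Set.Icc a (a + B) →
      Tendsto (fun x : ℕ => entranceProb X B a x u) atTop (nhds (θ a u)))
    (A0 : ℝ) (hA0 : 0 ≤ A0)
    (hA0' : ∀ A : ℝ, A0 ≤ A → ∀ᶠ x : ℕ in atTop, ∀ z : ℤ, z.natAbs ≤ B →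
      ∀ u ∈ Set.Icc (aFloor A x) (aFloor A x + B),
        |entranceProb X B (aFloor A x) (((x : ℤ) + z).toNat) u - θ (aFloor A x) u|
          ≤ (x : ℝ) ^ (-((2 * c - s2) / s2 + 3))) :
    ∀ A : ℝ, A0 ≤ A →
      (fun x : ℕ =>
          (Finset.Icc (-(B : ℤ)) (B : ℤ)).sup'
            (Finset.nonempty_Icc.mpr (neg_le_self (by positivity)))
            (fun z : ℤ =>
              |(hitProb X 0 (((x : ℤ) + z).toNat)).toReal / (hitProb X 0 x).toReal -
                (etaHitProb X B (aFloor A x) (((x : ℤ) + z).toNat)).toReal /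
                  (etaHitProb X B (aFloor A x) x).toReal|))
        =O[atTop] (fun x : ℕ => (x : ℝ) ^ (-(2 : ℝ))) := by
  classical
  obtain ⟨ε, m, hIW⟩ := hI
  intro A hA
  have hs2 : 0 < s2 := hL.2.1
  have h2c : s2 < 2 * c := hL.1
  have hγ : 0 < (2 * c - s2) / s2 := div_pos (by linarith) hs2
  by_cases hApos : 0 < A
  · -- main case
    set εr := ε.toReal with hεr
    have hεpos : 0 < εr := L510.eps_toReal_pos X hIW
    rw [Asymptotics.isBigO_iff]
    refine ⟨2 * ((B : ℝ) + 1) / εr ^ 3, ?_⟩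
    have hE1 := hA0' A hA
    have hlog : Tendsto (fun x : ℕ => A * Real.log x) atTop atTop :=
      (Real.tendsto_log_atTop.comp tendsto_natCast_atTop_atTop).const_mul_atTop hApos
    have hE3 : ∀ᶠ x : ℕ in atTop, (2 * B + 1 : ℝ) ≤ A * Real.log x :=
      hlog.eventually_ge_atTop _
    have hlogo : ∀ᶠ x : ℕ in atTop,
        ‖Real.log ((x : ℕ) : ℝ)‖ ≤ (1 / (2 * (A + 1))) * ‖((x : ℕ) : ℝ)‖ :=
      tendsto_natCast_atTop_atTop.eventually
        (Real.isLittleO_log_id_atTop.def (by positivity))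
    have hE2 : ∀ᶠ x : ℕ in atTop, 2 ≤ x := eventually_ge_atTop 2
    filter_upwards [hE1, hE2, hE3, hlogo] with x hx1 hx2 hx3 hx4
    have hx1R : (1 : ℝ) ≤ (x : ℝ) := by exact_mod_cast (by omega : 1 ≤ x)
    have hlogpos : 0 ≤ Real.log x := Real.log_nonneg hx1R
    have hfloor_lb : 2 * B + 1 ≤ ⌊A * Real.log x⌋₊ := Nat.le_floor (by exact_mod_cast hx3)
    have hfloor_ub : ⌊A * Real.log x⌋₊ + 1 ≤ x := by
      have h1 : (⌊A * Real.log x⌋₊ : ℝ) ≤ A * Real.log x := Nat.floor_le (by positivity)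
      have h2 : A * Real.log x ≤ (x : ℝ) / 2 := by
        rw [Real.norm_eq_abs, Real.norm_eq_abs, abs_of_nonneg hlogpos,
          abs_of_nonneg (by positivity : (0 : ℝ) ≤ (x : ℝ))] at hx4
        have hAx : A * Real.log x ≤ A * ((1 / (2 * (A + 1))) * (x : ℝ)) :=
          mul_le_mul_of_nonneg_left hx4 hApos.le
        have hfrac : A * ((1 / (2 * (A + 1))) * (x : ℝ)) ≤ (x : ℝ) / 2 := by
          have hA1 : 0 < A + 1 := by linarith
          have hx0 : (0 : ℝ) ≤ (x : ℝ) := by positivity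
          have key : A * ((1 / (2 * (A + 1))) * (x : ℝ)) = (x : ℝ) * A / (2 * (A + 1)) := by
            ring
          rw [key, div_le_div_iff₀ (by positivity) (by norm_num : (0:ℝ) < 2)]
          nlinarith [hx0]
        linarith
      have hx2R : (2 : ℝ) ≤ (x : ℝ) := by exact_mod_cast hx2
      have h3 : (⌊A * Real.log x⌋₊ : ℝ) < (x : ℝ) := by linarith
      have h4 : ⌊A * Real.log x⌋₊ < x := by exact_mod_cast h3
      omega
    have haval : aFloor A x = x - ⌊A * Real.log x⌋₊ := rfl
    have ha1 : 1 ≤ aFloor A x := by omega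
    have hax2 : aFloor A x + 2 * B < x := by omega
    have hax : aFloor A x + B < x := by omega
    have hrpow2 : 0 ≤ (x : ℝ) ^ (-(2 : ℝ)) := Real.rpow_nonneg (by positivity) _
    rw [Real.norm_eq_abs, Real.norm_eq_abs, abs_of_nonneg hrpow2]
    have h0mem : (0 : ℤ) ∈ Finset.Icc (-(B : ℤ)) (B : ℤ) := by
      rw [Finset.mem_Icc]; omega
    have hsup_nonneg := le_trans (abs_nonneg _) (Finset.le_sup'
      (fun z : ℤ =>
        |(hitProb X 0 (((x : ℤ) + z).toNat)).toReal / (hitProb X 0 x).toReal -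
          (etaHitProb X B (aFloor A x) (((x : ℤ) + z).toNat)).toReal /
            (etaHitProb X B (aFloor A x) x).toReal|) h0mem)
    rw [abs_of_nonneg hsup_nonneg]
    refine Finset.sup'_le _ _ ?_
    intro z hz
    rw [Finset.mem_Icc] at hz
    have hznat : z.natAbs ≤ B := by omega
    have hxz0 : (0 : ℤ) ≤ (x : ℤ) + z := by omega
    set y := ((x : ℤ) + z).toNat with hydef
    have hyz : (y : ℤ) = (x : ℤ) + z := Int.toNat_of_nonneg hxz0
    have hay : aFloor A x + B < y := by omega
    have hyx : ((y : ℤ) - (x : ℤ)).natAbs ≤ B := by omega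
    have hq : ∀ u ∈ Finset.Icc (aFloor A x) (aFloor A x + B),
        |entranceProb X B (aFloor A x) y u - entranceProb X B (aFloor A x) x u| ≤
          2 * (x : ℝ) ^ (-((2 * c - s2) / s2 + 3)) := by
      intro u hu
      rw [Finset.mem_Icc] at hu
      have humem : u ∈ Set.Icc (aFloor A x) (aFloor A x + B) := hu
      have h1 := hx1 z hznat u humem
      have h2 := hx1 0 (by simp) u humem
      rw [show ((x : ℤ) + 0).toNat = x by omega] at h2
      calc |entranceProb X B (aFloor A x) y u - entranceProb X B (aFloor A x) x u|
          ≤ |entranceProb X B (aFloor A x) y u - θ (aFloor A x) u| +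
            |entranceProb X B (aFloor A x) x u - θ (aFloor A x) u| := by
            rw [abs_sub_comm (entranceProb X B (aFloor A x) x u) (θ (aFloor A x) u)] at *
            exact abs_sub_le _ _ _
        _ ≤ 2 * (x : ℝ) ^ (-((2 * c - s2) / s2 + 3)) := by
            rw [two_mul]
            exact add_le_add h1 h2
    rw [L510.hitProb_eq X y, L510.hitProb_eq X x, L510.etaHitProb_eq X B (aFloor A x) y,
      L510.etaHitProb_eq X B (aFloor A x) x]
    refine le_trans (L510.main_bound X hIW hB hirr (aFloor A x) x y
      (2 * (x : ℝ) ^ (-((2 * c - s2) / s2 + 3))) ha1 hax hay hyx hq) ?_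
    set hra := (X.law (aFloor A x) (L510.HitS {0})).toReal with hhra
    have hrapos : 0 < hra := L510.hit_pos_real X hirr (aFloor A x) 0 {0} rfl
    have hε' : εr ≠ 0 := hεpos.ne'
    have hra' : hra ≠ 0 := hrapos.ne'
    have heq : (1 / εr) * (((B : ℝ) + 1) *
        ((2 * (x : ℝ) ^ (-((2 * c - s2) / s2 + 3))) * (hra / εr))) / (εr * hra)
        = (2 * ((B : ℝ) + 1) / εr ^ 3) * (x : ℝ) ^ (-((2 * c - s2) / s2 + 3)) := by
      field_simp
    rw [heq]
    refine mul_le_mul_of_nonneg_left ?_ (by positivity)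
    exact Real.rpow_le_rpow_of_exponent_le hx1R (by linarith)
  · -- degenerate case A = 0
    exfalso
    have hA0z : A = 0 := le_antisymm (not_lt.mp hApos) (hA0.trans hA)
    by_cases hBz : B = 0
    · subst hBz
      exact L510.b0_false X hB hirr
    · have haf : ∀ x : ℕ, aFloor A x = x := by
        intro x
        simp [aFloor, hA0z]
      have hev := hA0' A hA
      have hδ0 : 0 < (2 * c - s2) / s2 + 3 := by linarith
      have hto : Tendsto (fun x : ℕ => (x : ℝ) ^ (-((2 * c - s2) / s2 + 3))) atTop (nhds 0) :=
        (tendsto_rpow_neg_atTop hδ0).comp tendsto_natCast_atTop_atTop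
      have hsm : ∀ᶠ x : ℕ in atTop, (x : ℝ) ^ (-((2 * c - s2) / s2 + 3)) < 1 / 2 :=
        hto.eventually_lt_const (by norm_num)
      obtain ⟨x, hx, hxs⟩ := (hev.and hsm).exists
      have hx1 := hx
      simp only [haf] at hx1
      have hmem : x + B ∈ Set.Icc x (x + B) := ⟨Nat.le_add_right x B, le_refl _⟩
      have h1 := hx1 0 (by simp) (x + B) hmem
      rw [show ((x : ℤ) + 0).toNat = x by omega] at h1
      rw [L510.entrance_inside X x B x (x + B) ⟨le_refl x, Nat.le_add_right x B⟩] at h1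
      rw [if_neg (by omega)] at h1
      have h2 := hx1 (B : ℤ) (by simp) (x + B) hmem
      rw [show ((x : ℤ) + (B : ℤ)).toNat = x + B by omega] at h2
      rw [L510.entrance_inside X x B (x + B) (x + B)
        ⟨Nat.le_add_right x B, le_refl _⟩] at h2
      rw [if_pos rfl] at h2
      rw [abs_le] at h1 h2
      linarith [h1.1, h1.2, h2.1, h2.2, hxs]
end
end
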